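/- arXiv:1110.6070 — 5 statements merged into one kernel-verified Lean document; each statement's English description precedes it below -/
import Mathlib

section
/- Let T > 0 and let N : [0,T] → ℝ be continuously differentiable with N′ absolutely continuous on [0,T] and N″ ∈ L²(0,T); set ν = N(0)/2. For real ω with |ω| ≥ 1 define F(·;ω) : [0,T] → ℂ by F(t;ω) = −∫₀ᵗ N(t−s)·e^{iωs+νs} ds + (N(0)/(N(0)+4iω))·(e^{iωt+νt} − e^{−iωt}) + ∫₀ᵗ cos(ω(t−τ))·(∫₀^τ N′(τ−s)·e^{iωs+νs} ds) dτ. Then F(·;ω) is twice continuously differentiable on [0,T], F(0;ω) = 0, and there exist constants c, c₇, c₈ > 0 depending only on N and T such that for every real ω with |ω| ≥ 1: sup_{t∈[0,T]} |F(t;ω)| ≤ c/|ω|, sup_{t∈[0,T]} |∂_t F(t;ω)| ≤ c₇, and sup_{t∈[0,T]} |∂_t² F(t;ω)| ≤ c₈·|ω|. -/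
open MeasureTheory Set Complex Filter
open scoped Classical

noncomputable section

/-- `N` is C¹ on `[0,T]` with derivative `N'`, `N'` absolutely continuous with
a.e.-derivative `N''`, and `N'' ∈ L²(0,T)`. -/
def KernelReg (T : ℝ) (N N' N'' : ℝ → ℝ) : Prop :=
  (∀ t ∈ Icc (0:ℝ) T, HasDerivWithinAt N (N' t) (Icc (0:ℝ) T) t) ∧
  ContinuousOn N' (Icc (0:ℝ) T) ∧
  (∀ t ∈ Icc (0:ℝ) T, N' t = N' 0 + ∫ s in (0:ℝ)..t, N'' s) ∧
  MemLp N'' 2 (volume.restrict (Ioo (0:ℝ) T))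

/-- `N` is C¹ on `[0,T]`, `N'` absolutely continuous, `N'' ∈ L²(0,T)`. -/
def NiceKernel (T : ℝ) (N : ℝ → ℝ) : Prop := ∃ N' N'', KernelReg T N N' N''

/-- `x` is a twice continuously differentiable solution (with derivatives `x'`, `x''`)
of `x'' + ω² x + ω² ∫₀ᵗ N(t-τ) x(τ) dτ = 0` on `[0,T]`, `x 0 = x0`, `x' 0 = x1`. -/
def SolvesMemoryODEWith (T : ℝ) (N : ℝ → ℝ) (ω : ℂ) (x0 x1 : ℂ)
    (x x' x'' : ℝ → ℂ) : Prop :=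
  (∀ t ∈ Icc (0:ℝ) T, HasDerivWithinAt x (x' t) (Icc (0:ℝ) T) t) ∧
  (∀ t ∈ Icc (0:ℝ) T, HasDerivWithinAt x' (x'' t) (Icc (0:ℝ) T) t) ∧
  ContinuousOn x'' (Icc (0:ℝ) T) ∧
  (∀ t ∈ Icc (0:ℝ) T,
    x'' t + ω ^ 2 * x t + ω ^ 2 * ∫ τ in (0:ℝ)..t, (N (t - τ) : ℂ) * x τ = 0) ∧
  x 0 = x0 ∧ x' 0 = x1

def SolvesMemoryODE (T : ℝ) (N : ℝ → ℝ) (ω : ℂ) (x0 x1 : ℂ) (x : ℝ → ℂ) : Prop :=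
  ∃ x' x'', SolvesMemoryODEWith T N ω x0 x1 x x' x''

/-- the quasi-exponential Cauchy problem: `e 0 = 1`, `e' 0 = i ω`. -/
def IsQuasiExp (T : ℝ) (N : ℝ → ℝ) (ω : ℂ) (e : ℝ → ℂ) : Prop :=
  SolvesMemoryODE T N ω 1 (Complex.I * ω) e

/-- The element of `L²(0,T;ℂ)` determined by a function `f : ℝ → ℂ`. -/
def toL2 (T : ℝ) (f : ℝ → ℂ) : Lp ℂ 2 (volume.restrict (Ioo (0:ℝ) T)) :=
  if h : MemLp f 2 (volume.restrict (Ioo (0:ℝ) T)) then h.toLp f else 0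

/-- A family is a Riesz basis of a Hilbert space if it is the image of an orthonormal
basis under a bounded linear bijection with bounded inverse. -/
def IsRieszBasis {ι H : Type*} [NormedAddCommGroup H] [InnerProductSpace ℂ H]
    (f : ι → H) : Prop :=
  ∃ (b : HilbertBasis ι ℂ H) (U : H ≃L[ℂ] H), ∀ i, f i = U (b i)

/-- A family is an L-basis if it is a Riesz basis of the closure of its linear span. -/
def IsLBasis {ι H : Type*} [NormedAddCommGroup H] [InnerProductSpace ℂ H]
    (f : ι → H) : Prop :=
  ∃ (b : HilbertBasis ι ℂ ((Submodule.span ℂ (Set.range f)).topologicalClosure))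
    (U : ((Submodule.span ℂ (Set.range f)).topologicalClosure : Type _) ≃L[ℂ]
        ((Submodule.span ℂ (Set.range f)).topologicalClosure : Type _)),
    ∀ i, f i = (U (b i) : H)

/-- The eigenfrequency hypotheses: pairwise distinct, each a positive real or a positive
multiple of `i`, finitely many non-real, `ω_n - (π/L)(n - 1/2) → 0` (indexed from `1`,
i.e. index `n : ℕ` corresponds to the `(n+1)`-st frequency), separated. -/
def GoodFreq (L : ℝ) (ω : ℕ → ℂ) : Prop :=
  Function.Injective ω ∧
  (∀ n, (∃ r : ℝ, 0 < r ∧ ω n = (r : ℂ)) ∨ (∃ r : ℝ, 0 < r ∧ ω n = (r : ℂ) * Complex.I)) ∧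
  {n | ¬ ∃ r : ℝ, 0 < r ∧ ω n = (r : ℂ)}.Finite ∧
  Tendsto (fun n : ℕ => ω n - (Real.pi / L : ℝ) * ((n : ℂ) + 1 / 2)) atTop (nhds 0) ∧
  ∃ δ > 0, ∀ m n, m ≠ n → δ ≤ ‖ω m - ω n‖

/-- the sign `±1` attached to a Boolean. -/
def sgn (b : Bool) : ℂ := if b then 1 else -1

end


/-- The free term `F(t;ω)` of the Volterra equation for `E = e(·;ω) − e^{iωt+νt}`. -/
noncomputable def Ffree (N N' : ℝ → ℝ) (ω t : ℝ) : ℂ :=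
  -(∫ s in (0:ℝ)..t,
      (N (t - s) : ℂ) * Complex.exp (Complex.I * ω * s + ((N 0 : ℂ) / 2) * s))
  + ((N 0 : ℂ) / ((N 0 : ℂ) + 4 * Complex.I * ω)) *
      (Complex.exp (Complex.I * ω * t + ((N 0 : ℂ) / 2) * t) -
        Complex.exp (-Complex.I * ω * t))
  + ∫ τ in (0:ℝ)..t, (Real.cos (ω * (t - τ)) : ℂ) *
      ∫ s in (0:ℝ)..τ,
        (N' (τ - s) : ℂ) * Complex.exp (Complex.I * ω * s + ((N 0 : ℂ) / 2) * s)


open scoped Topology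
set_option maxHeartbeats 1000000

noncomputable section AuxFreeTerm

/-- Fubini on the triangle `0 ≤ s ≤ u ≤ t` against an exponential weight. -/
lemma tri_swap {t : ℝ} (ht : 0 ≤ t) {g : ℝ → ℝ} (hgm : StronglyMeasurable g)
    (hg : IntegrableOn g (Ioc 0 t)) (l : ℂ) :
    ∫ u in (0:ℝ)..t, ((∫ s in (0:ℝ)..u, g s : ℝ) : ℂ) * Complex.exp (-(l * u))
      = ∫ s in (0:ℝ)..t, (g s : ℂ) * ∫ u in s..t, Complex.exp (-(l * u)) := by
  set μ := volume.restrict (Ioc (0:ℝ) t) with hμ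
  set F : ℝ → ℝ → ℂ := fun u s =>
    (Ioc (0:ℝ) u).indicator (fun s' => (g s' : ℂ)) s * Complex.exp (-(l * u)) with hF
  have hEmeas : MeasurableSet {p : ℝ × ℝ | p.2 ∈ Ioc 0 p.1} := by
    apply MeasurableSet.inter
    · exact measurableSet_lt measurable_const measurable_snd
    · exact measurableSet_le measurable_snd measurable_fst
  have hmeas : Measurable (Function.uncurry F) := by
    have h1 : Measurable fun p : ℝ × ℝ => (g p.2 : ℂ) :=
      Complex.measurable_ofReal.comp (hgm.measurable.comp measurable_snd)
    have h2 : Measurable fun p : ℝ × ℝ => Complex.exp (-(l * p.1)) := by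
      fun_prop
    have : Function.uncurry F = fun p : ℝ × ℝ =>
        ({p : ℝ × ℝ | p.2 ∈ Ioc 0 p.1}.indicator (fun p => (g p.2 : ℂ)) p)
          * Complex.exp (-(l * p.1)) := by
      funext p
      simp only [Function.uncurry, hF, Set.indicator_apply, Set.mem_setOf_eq]
    rw [this]
    exact (h1.indicator hEmeas).mul h2
  have hInt : Integrable (Function.uncurry F) (μ.prod μ) := by
    refine ⟨hmeas.aestronglyMeasurable, ?_⟩
    have hbd : Integrable (fun p : ℝ × ℝ =>
        Real.exp (|l.re| * t) * |g p.2|) (μ.prod μ) := by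
      haveI : IsFiniteMeasure μ := by
        constructor
        rw [hμ, Measure.restrict_apply_univ]
        exact measure_Ioc_lt_top
      have hg' : Integrable (fun s => |g s|) μ := hg.abs
      simpa using (integrable_const (Real.exp (|l.re| * t))).mul_prod hg'
    refine (hbd.mono' hmeas.aestronglyMeasurable ?_).2
    rw [hμ, Measure.prod_restrict]
    refine (ae_restrict_iff' (measurableSet_Ioc.prod measurableSet_Ioc)).2 ?_
    filter_upwards with p hp
    rcases hp with ⟨hp1, _⟩
    have h1 : ‖Function.uncurry F p‖ ≤ ‖(g p.2 : ℂ)‖ * ‖Complex.exp (-(l * p.1))‖ := by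
      rw [Function.uncurry, hF]
      simp only [norm_mul]
      gcongr
      exact norm_indicator_le_norm_self _ _
    refine h1.trans ?_
    have h2 : ‖Complex.exp (-(l * (p.1:ℝ)))‖ ≤ Real.exp (|l.re| * t) := by
      rw [Complex.norm_exp]
      apply Real.exp_le_exp.2
      have : (-(l * (p.1:ℝ))).re = -(l.re * p.1) := by
        simp [Complex.mul_re]
      rw [this]
      have : -(l.re * p.1) ≤ |l.re * p.1| := neg_le_abs _ |>.trans_eq (abs_neg _).symm |>.trans (abs_neg _).le
      refine this.trans ?_
      rw [abs_mul]
      have hp1' : |p.1| ≤ t := by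
        rw [abs_of_pos hp1.1]; exact hp1.2
      calc |l.re| * |p.1| ≤ |l.re| * t := by gcongr
        _ = |l.re| * t := rfl
    calc ‖(g p.2 : ℂ)‖ * ‖Complex.exp (-(l * (p.1:ℝ)))‖
        ≤ |g p.2| * Real.exp (|l.re| * t) := by
          rw [Complex.norm_real, Real.norm_eq_abs]; gcongr
      _ = Real.exp (|l.re| * t) * |g p.2| := mul_comm _ _
  -- step A : LHS = iterated integral of F
  have stepA : ∫ u in (0:ℝ)..t, ((∫ s in (0:ℝ)..u, g s : ℝ) : ℂ) * Complex.exp (-(l * u))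
      = ∫ u, (∫ s, F u s ∂μ) ∂μ := by
    rw [intervalIntegral.integral_of_le ht]
    refine setIntegral_congr_fun measurableSet_Ioc ?_
    intro u hu
    have h0u : 0 ≤ u := hu.1.le
    have hsub : Ioc (0:ℝ) u ⊆ Ioc 0 t := Ioc_subset_Ioc_right hu.2
    have : ∫ s, (Ioc (0:ℝ) u).indicator (fun s' => (g s' : ℂ)) s ∂μ
        = ((∫ s in (0:ℝ)..u, g s : ℝ) : ℂ) := by
      rw [integral_indicator measurableSet_Ioc, hμ, Measure.restrict_restrict measurableSet_Ioc,
        inter_eq_self_of_subset_left hsub, intervalIntegral.integral_of_le h0u]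
      exact integral_ofReal
    rw [hF]
    simp only
    rw [integral_mul_const, this]
  -- step C : inner integral after swap
  have stepC : ∀ s ∈ Ioc (0:ℝ) t,
      (∫ u, F u s ∂μ) = (g s : ℂ) * ∫ u in s..t, Complex.exp (-(l * u)) := by
    intro s hs
    have hfun : (fun u => F u s)
        = (Ici s).indicator (fun u => (g s : ℂ) * Complex.exp (-(l * u))) := by
      funext u
      rw [hF]
      simp only [Set.indicator_apply, Set.mem_Ioc, Set.mem_Ici]
      by_cases h : s ≤ u
      · simp [h, hs.1]
      · simp [h, fun h' : 0 < s ∧ s ≤ u => h h'.2]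
    rw [hfun, integral_indicator measurableSet_Ici, hμ,
      Measure.restrict_restrict measurableSet_Ici]
    have hset : Ici s ∩ Ioc 0 t = Icc s t := by
      ext u
      simp only [mem_inter_iff, mem_Ici, mem_Ioc, mem_Icc]
      constructor
      · rintro ⟨h1, _, h3⟩; exact ⟨h1, h3⟩
      · rintro ⟨h1, h2⟩; exact ⟨h1, lt_of_lt_of_le hs.1 h1, h2⟩
    rw [hset, integral_Icc_eq_integral_Ioc, ← intervalIntegral.integral_of_le hs.2,
      ← intervalIntegral.integral_const_mul]
  rw [stepA, integral_integral_swap hInt, intervalIntegral.integral_of_le ht]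
  exact setIntegral_congr_fun measurableSet_Ioc stepC

lemma exp_int_eq {l : ℂ} (hl : l ≠ 0) (s t : ℝ) :
    (∫ u in s..t, Complex.exp (-(l * u)))
      = (Complex.exp (-(l * s)) - Complex.exp (-(l * t))) / l := by
  have h2 : (∫ u in s..t, Complex.exp (-(l * u)))
      = ∫ u in s..t, Complex.exp ((-l) * u) := by
    apply intervalIntegral.integral_congr; intro u _; norm_num
  rw [h2, integral_exp_mul_complex (neg_ne_zero.2 hl)]
  simp only [neg_mul]
  rw [div_eq_div_iff (neg_ne_zero.2 hl) hl]
  ring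

/-- key integration-by-parts bound. -/
lemma key_bound {T t : ℝ} (ht : t ∈ Icc 0 T) {g : ℝ → ℝ}
    (hg : IntegrableOn g (Ioc 0 T)) {f : ℝ → ℝ} (hcf : ContinuousOn f (Icc 0 t))
    (hf : ∀ u ∈ Icc 0 t, f u = f 0 + ∫ s in (0:ℝ)..u, g s) {l : ℂ} (hl : l ≠ 0) :
    ‖∫ u in (0:ℝ)..t, (f u : ℂ) * Complex.exp (-(l * u))‖
      ≤ (|f 0| + ∫ s in (0:ℝ)..T, |g s|) * (2 * Real.exp (|l.re| * T)) / ‖l‖ := by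
  obtain ⟨ht0, htT⟩ := ht
  have h0T : (0:ℝ) ≤ T := le_trans ht0 htT
  set E := Real.exp (|l.re| * T) with hE
  have hE0 : 0 < E := Real.exp_pos _
  have hexp : ∀ u : ℝ, u ∈ Icc 0 T → ‖Complex.exp (-(l * u))‖ ≤ E := by
    intro u hu
    rw [Complex.norm_exp, hE]
    apply Real.exp_le_exp.2
    have h1 : (-(l * (u:ℝ))).re = -(l.re * u) := by simp [Complex.mul_re]
    rw [h1]
    calc -(l.re * u) = -l.re * u := by ring
      _ ≤ |(-l.re) * u| := le_abs_self _
      _ = |l.re| * |u| := by rw [abs_mul, abs_neg]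
      _ ≤ |l.re| * T := by
          gcongr
          rw [_root_.abs_of_nonneg hu.1]; exact hu.2
  -- measurable representative of g
  set g₁ := hg.1.mk g with hg₁
  have hg₁m : StronglyMeasurable g₁ := hg.1.stronglyMeasurable_mk
  have hgg₁ : g =ᵐ[volume.restrict (Ioc 0 T)] g₁ := hg.1.ae_eq_mk
  have hg₁i : IntegrableOn g₁ (Ioc 0 T) := hg.congr_fun_ae hgg₁
  have hInt_eq : ∀ u ∈ Icc 0 t, (∫ s in (0:ℝ)..u, g s) = ∫ s in (0:ℝ)..u, g₁ s := by
    intro u hu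
    rw [intervalIntegral.integral_of_le hu.1, intervalIntegral.integral_of_le hu.1]
    apply integral_congr_ae
    exact ae_restrict_of_ae_restrict_of_subset (Ioc_subset_Ioc_right (le_trans hu.2 htT)) hgg₁
  have habs_eq : (∫ s in (0:ℝ)..T, |g s|) = ∫ s in (0:ℝ)..T, |g₁ s| := by
    rw [intervalIntegral.integral_of_le h0T, intervalIntegral.integral_of_le h0T]
    apply integral_congr_ae
    filter_upwards [hgg₁] with s hs
    rw [hs]
  have hf' : ∀ u ∈ Icc 0 t, f u = f 0 + ∫ s in (0:ℝ)..u, g₁ s := by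
    intro u hu; rw [hf u hu, hInt_eq u hu]
  have hg₁t : IntegrableOn g₁ (Ioc 0 t) := hg₁i.mono_set (Ioc_subset_Ioc_right htT)
  have hg₁iv : IntervalIntegrable g₁ volume 0 t :=
    (intervalIntegrable_iff_integrableOn_Ioc_of_le ht0).2 hg₁t
  -- split off the constant
  have hsplit : (∫ u in (0:ℝ)..t, (f u : ℂ) * Complex.exp (-(l * u)))
      = (f 0 : ℂ) * (∫ u in (0:ℝ)..t, Complex.exp (-(l * u)))
        + ∫ u in (0:ℝ)..t, ((∫ s in (0:ℝ)..u, g₁ s : ℝ) : ℂ) * Complex.exp (-(l * u)) := by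
    rw [← intervalIntegral.integral_const_mul, ← intervalIntegral.integral_add]
    · apply intervalIntegral.integral_congr
      intro u hu
      rw [uIcc_of_le ht0] at hu
      simp only [hf' u hu]
      push_cast
      ring
    · exact Continuous.intervalIntegrable (by fun_prop) _ _
    · apply ContinuousOn.intervalIntegrable
      rw [uIcc_of_le ht0]
      apply ContinuousOn.mul
      · have h1 : ContinuousOn (fun u => f u - f 0) (Icc 0 t) := hcf.sub continuousOn_const
        have h2 : ContinuousOn (fun u : ℝ => ((f u - f 0 : ℝ) : ℂ)) (Icc 0 t) :=
          Complex.continuous_ofReal.comp_continuousOn h1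
        apply h2.congr
        intro u hu
        simp only [hf' u hu]
        push_cast
        ring
      · fun_prop
  -- second piece bound
  have hswap := tri_swap ht0 hg₁m hg₁t l
  have hbound2 : ‖∫ u in (0:ℝ)..t, ((∫ s in (0:ℝ)..u, g₁ s : ℝ) : ℂ) * Complex.exp (-(l * u))‖
      ≤ (∫ s in (0:ℝ)..T, |g₁ s|) * (2 * E) / ‖l‖ := by
    rw [hswap]
    have hl0 : (0:ℝ) < ‖l‖ := norm_pos_iff.2 hl
    have hptbd : ∀ s ∈ Icc (0:ℝ) t, ‖(g₁ s : ℂ) * ∫ u in s..t, Complex.exp (-(l * u))‖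
        ≤ |g₁ s| * (2 * E / ‖l‖) := by
      intro s hs
      rw [norm_mul, Complex.norm_real (g₁ s), Real.norm_eq_abs, exp_int_eq hl]
      gcongr
      rw [norm_div, div_le_div_iff₀ hl0 hl0]
      calc ‖Complex.exp (-(l * s)) - Complex.exp (-(l * t))‖ * ‖l‖
          ≤ (E + E) * ‖l‖ := by
            gcongr
            refine (norm_sub_le _ _).trans ?_
            gcongr
            · exact hexp s ⟨hs.1, le_trans hs.2 htT⟩
            · exact hexp t ⟨ht0, htT⟩
        _ = 2 * E * ‖l‖ := by ring
    have hgiC : IntervalIntegrable (fun s => (g₁ s : ℂ)) volume 0 t := by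
      rw [intervalIntegrable_iff_integrableOn_Ioc_of_le ht0]
      exact hg₁t.ofReal
    have hii : IntervalIntegrable
        (fun s => (g₁ s : ℂ) * ∫ u in s..t, Complex.exp (-(l * u))) volume 0 t := by
      apply IntervalIntegrable.mul_continuousOn hgiC
      have : Continuous fun s : ℝ =>
          (Complex.exp (-(l * s)) - Complex.exp (-(l * t))) / l := by fun_prop
      apply this.continuousOn.congr
      intro s _
      exact exp_int_eq hl s t
    calc ‖∫ s in (0:ℝ)..t, (g₁ s : ℂ) * ∫ u in s..t, Complex.exp (-(l * u))‖
        ≤ ∫ s in (0:ℝ)..t, ‖(g₁ s : ℂ) * ∫ u in s..t, Complex.exp (-(l * u))‖ :=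
          intervalIntegral.norm_integral_le_integral_norm ht0
      _ ≤ ∫ s in (0:ℝ)..t, |g₁ s| * (2 * E / ‖l‖) := by
          apply intervalIntegral.integral_mono_on ht0 hii.norm
            (hg₁iv.abs.mul_const _) hptbd
      _ = (∫ s in (0:ℝ)..t, |g₁ s|) * (2 * E / ‖l‖) :=
          intervalIntegral.integral_mul_const _ _
      _ ≤ (∫ s in (0:ℝ)..T, |g₁ s|) * (2 * E / ‖l‖) := by
          apply mul_le_mul_of_nonneg_right _ (by positivity)
          apply intervalIntegral.integral_mono_interval le_rfl ht0 htT
          · filter_upwards with s using abs_nonneg _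
          · exact (intervalIntegrable_iff_integrableOn_Ioc_of_le h0T).2 hg₁i.abs
      _ = (∫ s in (0:ℝ)..T, |g₁ s|) * (2 * E) / ‖l‖ := by ring
  -- first piece bound
  have hbound1 : ‖(f 0 : ℂ) * ∫ u in (0:ℝ)..t, Complex.exp (-(l * u))‖
      ≤ |f 0| * (2 * E) / ‖l‖ := by
    have hl0 : (0:ℝ) < ‖l‖ := norm_pos_iff.2 hl
    rw [norm_mul, Complex.norm_real (f 0), Real.norm_eq_abs, exp_int_eq hl,
      norm_div, mul_div_assoc]
    gcongr
    calc ‖Complex.exp (-(l * ((0:ℝ):ℂ))) - Complex.exp (-(l * (t:ℝ)))‖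
        ≤ ‖Complex.exp (-(l * ((0:ℝ):ℂ)))‖ + ‖Complex.exp (-(l * (t:ℝ)))‖ := norm_sub_le _ _
      _ ≤ E + E := add_le_add (hexp 0 ⟨le_refl _, h0T⟩) (hexp t ⟨ht0, htT⟩)
      _ = 2 * E := by ring
  rw [hsplit, habs_eq]
  calc ‖(f 0 : ℂ) * (∫ u in (0:ℝ)..t, Complex.exp (-(l * u)))
        + ∫ u in (0:ℝ)..t, ((∫ s in (0:ℝ)..u, g₁ s : ℝ) : ℂ) * Complex.exp (-(l * u))‖
      ≤ ‖(f 0 : ℂ) * (∫ u in (0:ℝ)..t, Complex.exp (-(l * u)))‖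
        + ‖∫ u in (0:ℝ)..t, ((∫ s in (0:ℝ)..u, g₁ s : ℝ) : ℂ) * Complex.exp (-(l * u))‖ :=
        norm_add_le _ _
    _ ≤ |f 0| * (2 * E) / ‖l‖ + (∫ s in (0:ℝ)..T, |g₁ s|) * (2 * E) / ‖l‖ :=
        add_le_add hbound1 hbound2
    _ = (|f 0| + ∫ s in (0:ℝ)..T, |g₁ s|) * (2 * E) / ‖l‖ := by ring

def PPf (f : ℝ → ℝ) (l : ℂ) (t : ℝ) : ℂ :=
  ∫ u in (0:ℝ)..t, (f u : ℂ) * Complex.exp (-(l * u))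

def hhf (f : ℝ → ℝ) (l : ℂ) (t : ℝ) : ℂ := Complex.exp (l * t) * PPf f l t

def UUf (f : ℝ → ℝ) (l : ℂ) (ω t : ℝ) : ℂ :=
  ∫ τ in (0:ℝ)..t, (Real.cos (ω * τ) : ℂ) * hhf f l τ

def VVf (f : ℝ → ℝ) (l : ℂ) (ω t : ℝ) : ℂ :=
  ∫ τ in (0:ℝ)..t, (Real.sin (ω * τ) : ℂ) * hhf f l τ

def FFf (nb n'b : ℝ → ℝ) (l κ : ℂ) (ω t : ℝ) : ℂ :=
  -(hhf nb l t) + κ * (Complex.exp (l * t) - Complex.exp (-(Complex.I * ω) * t))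
  + (Real.cos (ω * t) : ℂ) * UUf n'b l ω t + (Real.sin (ω * t) : ℂ) * VVf n'b l ω t

def FF'f (nb n'b : ℝ → ℝ) (l κ : ℂ) (ω t : ℝ) : ℂ :=
  -(l * hhf nb l t + (nb t : ℂ))
  + κ * (l * Complex.exp (l * t) + Complex.I * ω * Complex.exp (-(Complex.I * ω) * t))
  + (ω : ℂ) * ((Real.cos (ω * t) : ℂ) * VVf n'b l ω t - (Real.sin (ω * t) : ℂ) * UUf n'b l ω t)
  + hhf n'b l t

def FF''f (nb n'b n' : ℝ → ℝ) (l κ : ℂ) (ω t : ℝ) : ℂ :=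
  -(l * (l * hhf nb l t + (nb t : ℂ)))
  + κ * (l ^ 2 * Complex.exp (l * t) + (ω : ℂ) ^ 2 * Complex.exp (-(Complex.I * ω) * t))
  - (ω : ℂ) ^ 2 * ((Real.sin (ω * t) : ℂ) * VVf n'b l ω t + (Real.cos (ω * t) : ℂ) * UUf n'b l ω t)
  + (l * hhf n'b l t + (n'b t : ℂ)) - (n' t : ℂ)

variable {f nb n'b n' : ℝ → ℝ} {l κ : ℂ} {ω t : ℝ}

lemma PPf_hasDerivAt (hf : Continuous f) (l : ℂ) (t : ℝ) :
    HasDerivAt (PPf f l) ((f t : ℂ) * Complex.exp (-(l * t))) t :=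
  (Continuous.integral_hasStrictDerivAt (by fun_prop) 0 t).hasDerivAt

lemma PPf_continuous (hf : Continuous f) (l : ℂ) : Continuous (PPf f l) :=
  continuous_iff_continuousAt.2 fun t => (PPf_hasDerivAt hf l t).continuousAt

lemma expl_hasDerivAt (l : ℂ) (t : ℝ) :
    HasDerivAt (fun s : ℝ => Complex.exp (l * s)) (l * Complex.exp (l * t)) t := by
  simpa [mul_comm] using (((hasDerivAt_id ((t:ℝ):ℂ)).const_mul l).cexp).comp_ofReal

lemma hhf_hasDerivAt (hf : Continuous f) (l : ℂ) (t : ℝ) :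
    HasDerivAt (hhf f l) (l * hhf f l t + (f t : ℂ)) t := by
  have h := (expl_hasDerivAt l t).mul (PPf_hasDerivAt hf l t)
  have key : Complex.exp (l * t) * ((f t : ℂ) * Complex.exp (-(l * t))) = (f t : ℂ) := by
    rw [mul_comm ((f t : ℂ)), ← mul_assoc, ← Complex.exp_add]
    simp
  convert h using 1
  · rfl
  · rfl
  simp only [hhf]
  linear_combination -key

lemma hhf_continuous (hf : Continuous f) (l : ℂ) : Continuous (hhf f l) :=
  continuous_iff_continuousAt.2 fun t => (hhf_hasDerivAt hf l t).continuousAt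

lemma UUf_hasDerivAt (hf : Continuous f) (l : ℂ) (ω t : ℝ) :
    HasDerivAt (UUf f l ω) ((Real.cos (ω * t) : ℂ) * hhf f l t) t := by
  have hc : Continuous fun τ : ℝ => (Real.cos (ω * τ) : ℂ) * hhf f l τ := by
    have := hhf_continuous hf l
    fun_prop
  exact (hc.integral_hasStrictDerivAt 0 t).hasDerivAt

lemma VVf_hasDerivAt (hf : Continuous f) (l : ℂ) (ω t : ℝ) :
    HasDerivAt (VVf f l ω) ((Real.sin (ω * t) : ℂ) * hhf f l t) t := by
  have hc : Continuous fun τ : ℝ => (Real.sin (ω * τ) : ℂ) * hhf f l τ := by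
    have := hhf_continuous hf l
    fun_prop
  exact (hc.integral_hasStrictDerivAt 0 t).hasDerivAt

lemma UUf_continuous (hf : Continuous f) (l : ℂ) (ω : ℝ) : Continuous (UUf f l ω) :=
  continuous_iff_continuousAt.2 fun t => (UUf_hasDerivAt hf l ω t).continuousAt

lemma VVf_continuous (hf : Continuous f) (l : ℂ) (ω : ℝ) : Continuous (VVf f l ω) :=
  continuous_iff_continuousAt.2 fun t => (VVf_hasDerivAt hf l ω t).continuousAt

lemma cosc_hasDerivAt (ω t : ℝ) :
    HasDerivAt (fun s : ℝ => ((Real.cos (ω * s) : ℝ) : ℂ))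
      ((-(ω * Real.sin (ω * t)) : ℝ) : ℂ) t := by
  have h1 : HasDerivAt (fun s : ℝ => Real.cos (ω * s)) (-(ω * Real.sin (ω * t))) t := by
    have := (Real.hasDerivAt_cos (ω * t)).comp t ((hasDerivAt_id t).const_mul ω)
    simpa [mul_comm, Function.comp_def] using this
  exact h1.ofReal_comp

lemma sinc_hasDerivAt (ω t : ℝ) :
    HasDerivAt (fun s : ℝ => ((Real.sin (ω * s) : ℝ) : ℂ))
      ((ω * Real.cos (ω * t) : ℝ) : ℂ) t := by
  have h1 : HasDerivAt (fun s : ℝ => Real.sin (ω * s)) (ω * Real.cos (ω * t)) t := by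
    have := (Real.hasDerivAt_sin (ω * t)).comp t ((hasDerivAt_id t).const_mul ω)
    simpa [mul_comm, Function.comp_def] using this
  exact h1.ofReal_comp

lemma FFf_hasDerivAt (hnb : Continuous nb) (hn'b : Continuous n'b)
    (l κ : ℂ) (ω t : ℝ) :
    HasDerivAt (FFf nb n'b l κ ω) (FF'f nb n'b l κ ω t) t := by
  have h1 := (hhf_hasDerivAt hnb l t).neg
  have h2 := ((expl_hasDerivAt l t).sub (expl_hasDerivAt (-(Complex.I * ω)) t)).const_mul κ
  have h3 := (cosc_hasDerivAt ω t).mul (UUf_hasDerivAt hn'b l ω t)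
  have h4 := (sinc_hasDerivAt ω t).mul (VVf_hasDerivAt hn'b l ω t)
  have H := ((h1.add h2).add h3).add h4
  have trig : Complex.cos (ω * t) ^ 2 + Complex.sin (ω * t) ^ 2 = 1 :=
    Complex.cos_sq_add_sin_sq _
  convert H using 1
  · rfl
  · rfl
  simp only [FF'f]
  push_cast
  linear_combination (-(hhf n'b l t)) * trig

lemma ofReal_comp_within {f : ℝ → ℝ} {u x : ℝ} {s : Set ℝ}
    (hf : HasDerivWithinAt f u s x) :
    HasDerivWithinAt (fun y : ℝ => ((f y : ℝ) : ℂ)) ((u : ℝ) : ℂ) s x := by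
  simpa [Function.comp_def] using Complex.ofRealCLM.hasFDerivAt.comp_hasDerivWithinAt x hf

lemma FF'f_hasDerivWithinAt (hnb : Continuous nb) (hn'b : Continuous n'b)
    (l κ : ℂ) (ω : ℝ) {s : Set ℝ} {t : ℝ}
    (hder : HasDerivWithinAt (fun y : ℝ => ((nb y : ℝ) : ℂ)) ((n' t : ℝ) : ℂ) s t) :
    HasDerivWithinAt (FF'f nb n'b l κ ω) (FF''f nb n'b n' l κ ω t) s t := by
  have h1 : HasDerivWithinAt (fun y => -(l * hhf nb l y + ((nb y : ℝ) : ℂ)))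
      (-(l * (l * hhf nb l t + (nb t : ℂ)) + (n' t : ℂ))) s t :=
    ((((hhf_hasDerivAt hnb l t).hasDerivWithinAt.const_mul l).add hder)).neg
  have h2 := (((expl_hasDerivAt l t).const_mul l).add
    ((expl_hasDerivAt (-(Complex.I * ω)) t).const_mul (Complex.I * ω))).const_mul κ
  have h3 := ((cosc_hasDerivAt ω t).mul (VVf_hasDerivAt hn'b l ω t)).sub
    ((sinc_hasDerivAt ω t).mul (UUf_hasDerivAt hn'b l ω t))
  have h4 := h3.const_mul ((ω : ℝ) : ℂ)
  have h5 := hhf_hasDerivAt hn'b l t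
  have H := ((h1.add h2.hasDerivWithinAt).add h4.hasDerivWithinAt).add h5.hasDerivWithinAt
  convert H using 1
  · rfl
  · rfl
  simp only [FF''f]
  push_cast
  ring_nf
  rw [Complex.I_sq]
  ring

lemma FF''f_continuousOn (hnb : Continuous nb) (hn'b : Continuous n'b)
    (l κ : ℂ) (ω : ℝ) {T : ℝ} (hn' : ContinuousOn n' (Icc 0 T)) :
    ContinuousOn (FF''f nb n'b n' l κ ω) (Icc 0 T) := by
  have hglob : Continuous (fun t : ℝ =>
      -(l * (l * hhf nb l t + (nb t : ℂ)))
      + κ * (l ^ 2 * Complex.exp (l * t) + (ω : ℂ) ^ 2 * Complex.exp (-(Complex.I * ω) * t))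
      - (ω : ℂ) ^ 2 * ((Real.sin (ω * t) : ℂ) * VVf n'b l ω t
          + (Real.cos (ω * t) : ℂ) * UUf n'b l ω t)
      + (l * hhf n'b l t + (n'b t : ℂ))) := by
    have hU := UUf_continuous hn'b l ω
    have hV := VVf_continuous hn'b l ω
    have hh1 := hhf_continuous hnb l
    have hh2 := hhf_continuous hn'b l
    fun_prop
  have hn'c : ContinuousOn (fun t => ((n' t : ℝ) : ℂ)) (Icc 0 T) :=
    Complex.continuous_ofReal.comp_continuousOn hn'
  exact hglob.continuousOn.sub hn'c

/-- rewriting the convolution against the exponential in factorized form. -/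
lemma conv_eq {T' t : ℝ} {f fb : ℝ → ℝ} (heq : EqOn f fb (Icc 0 T')) (l : ℂ)
    (ht : t ∈ Icc 0 T') :
    (∫ s in (0:ℝ)..t, (f (t - s) : ℂ) * Complex.exp (l * s)) = hhf fb l t := by
  have h0t : (0:ℝ) ≤ t := ht.1
  have step1 : EqOn (fun s => (f (t - s) : ℂ) * Complex.exp (l * s))
      (fun s => (fun u : ℝ => Complex.exp (l * t) * ((fb u : ℂ) * Complex.exp (-(l * u)))) (t - s))
      (uIcc 0 t) := by
    intro s hs
    rw [uIcc_of_le h0t] at hs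
    have hmem : t - s ∈ Icc 0 T' := ⟨by linarith [hs.2], by linarith [hs.1, ht.2]⟩
    simp only
    rw [heq hmem]
    rw [show Complex.exp (l * t) * ((fb (t - s) : ℂ) * Complex.exp (-(l * ((t - s : ℝ) : ℂ))))
        = (fb (t - s) : ℂ) * (Complex.exp (l * t) * Complex.exp (-(l * ((t - s : ℝ) : ℂ)))) from by
      ring]
    rw [← Complex.exp_add]
    congr 2
    push_cast
    ring
  rw [intervalIntegral.integral_congr step1,
    intervalIntegral.integral_comp_sub_left
      (fun u : ℝ => Complex.exp (l * t) * ((fb u : ℂ) * Complex.exp (-(l * u)))) t]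
  simp only [sub_self, sub_zero]
  rw [intervalIntegral.integral_const_mul]
  rfl

lemma tri4 (a b c d : ℂ) : ‖a + b + c + d‖ ≤ ‖a‖ + ‖b‖ + ‖c‖ + ‖d‖ := by
  calc ‖a + b + c + d‖ ≤ ‖a + b + c‖ + ‖d‖ := norm_add_le _ _
    _ ≤ (‖a + b‖ + ‖c‖) + ‖d‖ := by gcongr; exact norm_add_le _ _
    _ ≤ ((‖a‖ + ‖b‖) + ‖c‖) + ‖d‖ := by gcongr <;> exact norm_add_le _ _
    _ = ‖a‖ + ‖b‖ + ‖c‖ + ‖d‖ := by ring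

lemma tri5 (a b c d e : ℂ) : ‖a + b - c + d - e‖ ≤ ‖a‖ + ‖b‖ + ‖c‖ + ‖d‖ + ‖e‖ := by
  calc ‖a + b - c + d - e‖ ≤ ‖a + b - c + d‖ + ‖e‖ := norm_sub_le _ _
    _ ≤ (‖a + b - c‖ + ‖d‖) + ‖e‖ := by gcongr; exact norm_add_le _ _
    _ ≤ ((‖a + b‖ + ‖c‖) + ‖d‖) + ‖e‖ := by gcongr; exact norm_sub_le _ _
    _ ≤ (((‖a‖ + ‖b‖) + ‖c‖) + ‖d‖) + ‖e‖ := by gcongr; exact norm_add_le _ _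
    _ = ‖a‖ + ‖b‖ + ‖c‖ + ‖d‖ + ‖e‖ := by ring


end AuxFreeTerm

/-- `F(·;ω)` is C², vanishes at `0`, and satisfies the bounds
`|F| ≤ c/|ω|`, `|∂ₜF| ≤ c₇`, `|∂ₜ²F| ≤ c₈|ω|` uniformly for `|ω| ≥ 1`. -/
theorem free_term_bounds
    (T : ℝ) (hT : 0 < T) (N N' N'' : ℝ → ℝ) (hN : KernelReg T N N' N'') :
    ∃ c > 0, ∃ c₇ > 0, ∃ c₈ > 0, ∀ ω : ℝ, 1 ≤ |ω| →
      Ffree N N' ω 0 = 0 ∧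
      ∃ F' F'' : ℝ → ℂ,
        (∀ t ∈ Icc (0:ℝ) T, HasDerivWithinAt (Ffree N N' ω) (F' t) (Icc (0:ℝ) T) t) ∧
        (∀ t ∈ Icc (0:ℝ) T, HasDerivWithinAt F' (F'' t) (Icc (0:ℝ) T) t) ∧
        ContinuousOn F'' (Icc (0:ℝ) T) ∧
        (∀ t ∈ Icc (0:ℝ) T, ‖Ffree N N' ω t‖ ≤ c / |ω|) ∧
        (∀ t ∈ Icc (0:ℝ) T, ‖F' t‖ ≤ c₇) ∧
        (∀ t ∈ Icc (0:ℝ) T, ‖F'' t‖ ≤ c₈ * |ω|) := by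
  obtain ⟨hd, hc', hac, hL2⟩ := hN
  have h0T : (0:ℝ) ≤ T := hT.le
  have h0mem : (0:ℝ) ∈ Icc (0:ℝ) T := ⟨le_refl _, h0T⟩
  have hNc : ContinuousOn N (Icc 0 T) := fun x hx => (hd x hx).continuousWithinAt
  -- continuous extensions
  set pr : ℝ → ℝ := fun x => max 0 (min T x) with hpr
  have hprc : Continuous pr := by fun_prop
  have hprmem : ∀ x, pr x ∈ Icc (0:ℝ) T :=
    fun x => ⟨le_max_left _ _, max_le h0T (min_le_left _ _)⟩
  have hprid : ∀ x ∈ Icc (0:ℝ) T, pr x = x := by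
    intro x hx
    rw [hpr]
    simp only
    rw [min_eq_right hx.2, max_eq_right hx.1]
  set nb : ℝ → ℝ := N ∘ pr with hnb
  set n'b : ℝ → ℝ := N' ∘ pr with hn'b
  have hnbc : Continuous nb := hNc.comp_continuous hprc hprmem
  have hn'bc : Continuous n'b := hc'.comp_continuous hprc hprmem
  have hnbeq : EqOn N nb (Icc 0 T) := by
    intro x hx; rw [hnb]; simp only [Function.comp_apply, hprid x hx]
  have hn'beq : EqOn N' n'b (Icc 0 T) := by
    intro x hx; rw [hn'b]; simp only [Function.comp_apply, hprid x hx]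
  -- sup bounds
  obtain ⟨Mn, hMn⟩ := (isCompact_Icc : IsCompact (Icc (0:ℝ) T)).exists_bound_of_continuousOn hNc
  obtain ⟨Mn', hMn'⟩ := (isCompact_Icc : IsCompact (Icc (0:ℝ) T)).exists_bound_of_continuousOn hc'
  have hMn0 : 0 ≤ Mn := le_trans (norm_nonneg _) (hMn 0 h0mem)
  have hMn'0 : 0 ≤ Mn' := le_trans (norm_nonneg _) (hMn' 0 h0mem)
  -- integrability
  have hN'int : IntegrableOn N' (Ioc 0 T) :=
    (hc'.integrableOn_Icc).mono_set Ioc_subset_Icc_self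
  have hN''int : IntegrableOn N'' (Ioc 0 T) := by
    haveI : IsFiniteMeasure (volume.restrict (Ioo (0:ℝ) T)) := by
      constructor
      rw [Measure.restrict_apply_univ]
      exact measure_Ioo_lt_top
    have h1 : MemLp N'' 1 (volume.restrict (Ioo (0:ℝ) T)) :=
      hL2.mono_exponent (by norm_num)
    have h2 : IntegrableOn N'' (Ioo 0 T) := memLp_one_iff_integrable.1 h1
    exact h2.congr_set_ae Ioo_ae_eq_Ioc.symm
  -- N is a primitive of N'
  have hNrepr : ∀ u ∈ Icc (0:ℝ) T, N u = N 0 + ∫ s in (0:ℝ)..u, N' s := by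
    intro u hu
    have hle : (0:ℝ) ≤ u := hu.1
    have key : ∫ s in (0:ℝ)..u, N' s = N u - N 0 := by
      apply intervalIntegral.integral_eq_sub_of_hasDeriv_right_of_le hle
      · exact hNc.mono (Icc_subset_Icc le_rfl hu.2)
      · intro x hx
        have hx' : x ∈ Icc (0:ℝ) T := ⟨hx.1.le, hx.2.le.trans hu.2⟩
        have hnhds : Icc (0:ℝ) T ∈ 𝓝 x :=
          Icc_mem_nhds (lt_of_lt_of_le hx.1 le_rfl) (lt_of_lt_of_le hx.2 hu.2)
        exact ((hd x hx').hasDerivAt hnhds).hasDerivWithinAt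
      · apply ContinuousOn.intervalIntegrable
        rw [uIcc_of_le hle]
        exact hc'.mono (Icc_subset_Icc le_rfl hu.2)
    rw [key]; ring
  -- constants
  set ν := N 0 / 2 with hν
  set E := Real.exp (|ν| * T) with hE
  have hE0 : 0 < E := Real.exp_pos _
  have hE1 : 1 ≤ E := by
    rw [hE, ← Real.exp_zero]
    apply Real.exp_le_exp.2; positivity
  set In' := ∫ s in (0:ℝ)..T, |N' s| with hIn'
  set In'' := ∫ s in (0:ℝ)..T, |N'' s| with hIn''
  have hIn'0 : 0 ≤ In' :=
    intervalIntegral.integral_nonneg h0T (fun s _ => abs_nonneg _)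
  have hIn''0 : 0 ≤ In'' :=
    intervalIntegral.integral_nonneg h0T (fun s _ => abs_nonneg _)
  set CP := (|N 0| + In') * (2 * E) with hCP
  set CQ := (|N' 0| + In'') * (2 * E) with hCQ
  have hCP0 : 0 ≤ CP := by positivity
  have hCQ0 : 0 ≤ CQ := by positivity
  set c := E * CP + |N 0| * (E + 1) / 4 + 2 * T * E * CQ + 1 with hc
  set c₇ := (1 + |ν|) * (E * CP) + Mn + |N 0| * ((1 + |ν|) * E + 1) / 4
      + 2 * (T * (E * CQ)) + E * CQ + 1 with hc₇
  set c₈ := (1 + |ν|) * ((1 + |ν|) * (E * CP) + Mn)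
      + |N 0| * ((1 + |ν|) * ((1 + |ν|) * E) + 1) / 4
      + 2 * (T * (E * CQ)) + ((1 + |ν|) * (E * CQ) + Mn') + Mn' + 1 with hc₈
  refine ⟨c, by positivity, c₇, by positivity, c₈, by positivity, ?_⟩
  intro ω hω
  have hω0 : (0:ℝ) < |ω| := lt_of_lt_of_le one_pos hω
  set l := Complex.I * (ω:ℂ) + ((ν:ℝ):ℂ) with hl
  have hlre : l.re = ν := by simp [hl]
  have hlim : l.im = ω := by simp [hl]
  have hlne : l ≠ 0 := by
    intro h
    rw [h] at hlim
    simp at hlim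
    rw [← hlim] at hω0
    simp at hω0
  have hlnorm : (0:ℝ) < ‖l‖ := norm_pos_iff.2 hlne
  have hlge : |ω| ≤ ‖l‖ := by
    calc |ω| = |l.im| := by rw [hlim]
      _ ≤ ‖l‖ := Complex.abs_im_le_norm l
      _ = ‖l‖ := rfl
  have hlle : ‖l‖ ≤ (1 + |ν|) * |ω| := by
    calc ‖l‖ ≤ ‖Complex.I * (ω:ℂ)‖ + ‖((ν:ℝ):ℂ)‖ := norm_add_le _ _
      _ = |ω| + |ν| := by simp
      _ ≤ |ω| + |ν| * |ω| := by nlinarith [abs_nonneg ν]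
      _ = (1 + |ν|) * |ω| := by ring
  set κ := ((N 0 : ℝ) : ℂ) / (((N 0 : ℝ) : ℂ) + 4 * Complex.I * (ω:ℂ)) with hκ
  have hκb : ‖κ‖ ≤ |N 0| / (4 * |ω|) := by
    rw [hκ, norm_div]
    have hden : 4 * |ω| ≤ ‖((N 0 : ℝ) : ℂ) + 4 * Complex.I * (ω:ℂ)‖ := by
      calc 4 * |ω| = |(((N 0 : ℝ) : ℂ) + 4 * Complex.I * (ω:ℂ)).im| := by
            simp [abs_mul]
        _ ≤ ‖((N 0 : ℝ) : ℂ) + 4 * Complex.I * (ω:ℂ)‖ :=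
            Complex.abs_im_le_norm _
        _ = _ := rfl
    calc ‖((N 0:ℝ):ℂ)‖ / ‖((N 0 : ℝ) : ℂ) + 4 * Complex.I * (ω:ℂ)‖
        ≤ ‖((N 0:ℝ):ℂ)‖ / (4 * |ω|) :=
          div_le_div_of_nonneg_left (norm_nonneg _) (by positivity) hden
      _ = |N 0| / (4 * |ω|) := by rw [Complex.norm_real, Real.norm_eq_abs]
  -- exponential bounds
  have hexpl : ∀ x ∈ Icc (0:ℝ) T, ‖Complex.exp (l * x)‖ ≤ E := by
    intro x hx
    rw [Complex.norm_exp, hE]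
    apply Real.exp_le_exp.2
    have : (l * (x:ℝ)).re = ν * x := by
      simp [Complex.mul_re, hlre, hlim]
    rw [this]
    calc ν * x ≤ |ν * x| := le_abs_self _
      _ = |ν| * |x| := abs_mul _ _
      _ ≤ |ν| * T := by
          gcongr
          rw [_root_.abs_of_nonneg hx.1]; exact hx.2
  have hexpml : ∀ x ∈ Icc (0:ℝ) T, ‖Complex.exp (-(l * x))‖ ≤ E := by
    intro x hx
    rw [Complex.norm_exp, hE]
    apply Real.exp_le_exp.2
    have : (-(l * (x:ℝ))).re = -(ν * x) := by
      simp [Complex.mul_re, hlre, hlim]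
    rw [this]
    calc -(ν * x) ≤ |ν * x| := neg_le_abs _
      _ = |ν| * |x| := abs_mul _ _
      _ ≤ |ν| * T := by
          gcongr
          rw [_root_.abs_of_nonneg hx.1]; exact hx.2
  have hexpi : ∀ x : ℝ, ‖Complex.exp (-(Complex.I * (ω:ℂ)) * x)‖ = 1 := by
    intro x
    rw [Complex.norm_exp]
    have : ((-(Complex.I * (ω:ℂ))) * (x:ℝ)).re = 0 := by
      simp [Complex.mul_re]
    rw [this, Real.exp_zero]
  -- P and Q bounds
  have hPb : ∀ t ∈ Icc (0:ℝ) T, ‖PPf nb l t‖ ≤ CP / |ω| := by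
    intro t ht
    have h1 : ∀ u ∈ Icc (0:ℝ) t, nb u = nb 0 + ∫ s in (0:ℝ)..u, N' s := by
      intro u hu
      have huT : u ∈ Icc (0:ℝ) T := ⟨hu.1, hu.2.trans ht.2⟩
      rw [← hnbeq huT, ← hnbeq h0mem]
      exact hNrepr u huT
    have h2 := key_bound ht hN'int hnbc.continuousOn h1 hlne
    have h3 : (|nb 0| + ∫ s in (0:ℝ)..T, |N' s|) * (2 * Real.exp (|l.re| * T)) / ‖l‖
        = CP / ‖l‖ := by
      rw [hlre, ← hnbeq h0mem, hCP, hIn', hE]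
    rw [h3] at h2
    refine le_trans h2 ?_
    exact div_le_div_of_nonneg_left hCP0 hω0 hlge
  have hQb : ∀ t ∈ Icc (0:ℝ) T, ‖PPf n'b l t‖ ≤ CQ / |ω| := by
    intro t ht
    have h1 : ∀ u ∈ Icc (0:ℝ) t, n'b u = n'b 0 + ∫ s in (0:ℝ)..u, N'' s := by
      intro u hu
      have huT : u ∈ Icc (0:ℝ) T := ⟨hu.1, hu.2.trans ht.2⟩
      rw [← hn'beq huT, ← hn'beq h0mem]
      exact hac u huT
    have h2 := key_bound ht hN''int hn'bc.continuousOn h1 hlne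
    have h3 : (|n'b 0| + ∫ s in (0:ℝ)..T, |N'' s|) * (2 * Real.exp (|l.re| * T)) / ‖l‖
        = CQ / ‖l‖ := by
      rw [hlre, ← hn'beq h0mem, hCQ, hIn'', hE]
    rw [h3] at h2
    refine le_trans h2 ?_
    exact div_le_div_of_nonneg_left hCQ0 hω0 hlge
  have hhnb : ∀ t ∈ Icc (0:ℝ) T, ‖hhf nb l t‖ ≤ E * (CP / |ω|) := by
    intro t ht
    rw [hhf, norm_mul]
    exact mul_le_mul (hexpl t ht) (hPb t ht) (norm_nonneg _) hE0.le
  have hhn'b : ∀ t ∈ Icc (0:ℝ) T, ‖hhf n'b l t‖ ≤ E * (CQ / |ω|) := by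
    intro t ht
    rw [hhf, norm_mul]
    exact mul_le_mul (hexpl t ht) (hQb t ht) (norm_nonneg _) hE0.le
  have hUb : ∀ t ∈ Icc (0:ℝ) T, ‖UUf n'b l ω t‖ ≤ T * (E * (CQ / |ω|)) := by
    intro t ht
    rw [UUf]
    have := intervalIntegral.norm_integral_le_of_norm_le_const
      (C := E * (CQ / |ω|)) (f := fun τ => (Real.cos (ω * τ) : ℂ) * hhf n'b l τ)
      (a := 0) (b := t) ?_
    · refine le_trans this ?_
      rw [sub_zero, _root_.abs_of_nonneg ht.1, mul_comm]
      exact mul_le_mul_of_nonneg_right ht.2 (by positivity)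
    · intro x hx
      rw [uIoc_of_le ht.1] at hx
      have hxT : x ∈ Icc (0:ℝ) T := ⟨hx.1.le, hx.2.trans ht.2⟩
      rw [norm_mul]
      calc ‖((Real.cos (ω * x) : ℝ) : ℂ)‖ * ‖hhf n'b l x‖
          ≤ 1 * (E * (CQ / |ω|)) := by
            apply mul_le_mul _ (hhn'b x hxT) (norm_nonneg _) one_pos.le
            rw [Complex.norm_real, Real.norm_eq_abs]
            exact Real.abs_cos_le_one _
        _ = E * (CQ / |ω|) := one_mul _
  have hVb : ∀ t ∈ Icc (0:ℝ) T, ‖VVf n'b l ω t‖ ≤ T * (E * (CQ / |ω|)) := by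
    intro t ht
    rw [VVf]
    have := intervalIntegral.norm_integral_le_of_norm_le_const
      (C := E * (CQ / |ω|)) (f := fun τ => (Real.sin (ω * τ) : ℂ) * hhf n'b l τ)
      (a := 0) (b := t) ?_
    · refine le_trans this ?_
      rw [sub_zero, _root_.abs_of_nonneg ht.1, mul_comm]
      exact mul_le_mul_of_nonneg_right ht.2 (by positivity)
    · intro x hx
      rw [uIoc_of_le ht.1] at hx
      have hxT : x ∈ Icc (0:ℝ) T := ⟨hx.1.le, hx.2.trans ht.2⟩
      rw [norm_mul]
      calc ‖((Real.sin (ω * x) : ℝ) : ℂ)‖ * ‖hhf n'b l x‖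
          ≤ 1 * (E * (CQ / |ω|)) := by
            apply mul_le_mul _ (hhn'b x hxT) (norm_nonneg _) one_pos.le
            rw [Complex.norm_real, Real.norm_eq_abs]
            exact Real.abs_sin_le_one _
        _ = E * (CQ / |ω|) := one_mul _
  -- the key identity  Ffree = FFf on [0,T]
  have hFeq : ∀ t ∈ Icc (0:ℝ) T, Ffree N N' ω t = FFf nb n'b l κ ω t := by
    intro t ht
    have e1 : (∫ s in (0:ℝ)..t,
        (N (t - s) : ℂ) * Complex.exp (Complex.I * ω * s + ((N 0 : ℂ) / 2) * s))
        = hhf nb l t := by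
      rw [← conv_eq hnbeq l ht]
      apply intervalIntegral.integral_congr
      intro s _
      congr 1
      rw [hl, hν]
      push_cast
      ring
    have e2 : ∀ τ ∈ Icc (0:ℝ) T, (∫ s in (0:ℝ)..τ,
        (N' (τ - s) : ℂ) * Complex.exp (Complex.I * ω * s + ((N 0 : ℂ) / 2) * s))
        = hhf n'b l τ := by
      intro τ hτ
      rw [← conv_eq hn'beq l hτ]
      apply intervalIntegral.integral_congr
      intro s _
      congr 1
      rw [hl, hν]
      push_cast
      ring
    have e3 : (∫ τ in (0:ℝ)..t, (Real.cos (ω * (t - τ)) : ℂ) *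
        ∫ s in (0:ℝ)..τ,
          (N' (τ - s) : ℂ) * Complex.exp (Complex.I * ω * s + ((N 0 : ℂ) / 2) * s))
        = (Real.cos (ω * t) : ℂ) * UUf n'b l ω t
          + (Real.sin (ω * t) : ℂ) * VVf n'b l ω t := by
      have congr1 : EqOn (fun τ => (Real.cos (ω * (t - τ)) : ℂ) *
          ∫ s in (0:ℝ)..τ,
            (N' (τ - s) : ℂ) * Complex.exp (Complex.I * ω * s + ((N 0 : ℂ) / 2) * s))
          (fun τ => (Real.cos (ω * t) : ℂ) * ((Real.cos (ω * τ) : ℂ) * hhf n'b l τ)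
            + (Real.sin (ω * t) : ℂ) * ((Real.sin (ω * τ) : ℂ) * hhf n'b l τ))
          (uIcc 0 t) := by
        intro τ hτ
        rw [uIcc_of_le ht.1] at hτ
        simp only
        rw [e2 τ ⟨hτ.1, hτ.2.trans ht.2⟩]
        have hcos : Real.cos (ω * (t - τ))
            = Real.cos (ω * t) * Real.cos (ω * τ) + Real.sin (ω * t) * Real.sin (ω * τ) := by
          rw [mul_sub, Real.cos_sub]
        rw [hcos]
        push_cast
        ring
      have hi1 : IntervalIntegrable (fun τ => (Real.cos (ω * t) : ℂ) *
          ((Real.cos (ω * τ) : ℂ) * hhf n'b l τ)) volume 0 t := by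
        apply Continuous.intervalIntegrable
        have := hhf_continuous hn'bc l
        fun_prop
      have hi2 : IntervalIntegrable (fun τ => (Real.sin (ω * t) : ℂ) *
          ((Real.sin (ω * τ) : ℂ) * hhf n'b l τ)) volume 0 t := by
        apply Continuous.intervalIntegrable
        have := hhf_continuous hn'bc l
        fun_prop
      rw [intervalIntegral.integral_congr congr1, intervalIntegral.integral_add hi1 hi2,
        intervalIntegral.integral_const_mul, intervalIntegral.integral_const_mul]
      rfl
    rw [Ffree, e1, e3]
    have eB1 : Complex.exp (Complex.I * ω * t + ((N 0 : ℂ) / 2) * t)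
        = Complex.exp (l * t) := by
      congr 1
      rw [hl, hν]
      push_cast
      ring
    have eB2 : Complex.exp (-Complex.I * ω * t) = Complex.exp (-(Complex.I * (ω:ℂ)) * t) := by
      congr 1
      ring
    rw [eB1, eB2, ← hκ, FFf]
    ring
  -- conclusion
  refine ⟨?_, FF'f nb n'b l κ ω, FF''f nb n'b N' l κ ω, ?_, ?_, ?_, ?_, ?_, ?_⟩
  · rw [Ffree]
    simp only [Complex.ofReal_zero, mul_zero, zero_mul, add_zero,
      intervalIntegral.integral_same, neg_zero, Complex.exp_zero, sub_self, zero_add]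
  · intro t ht
    exact ((FFf_hasDerivAt hnbc hn'bc l κ ω t).hasDerivWithinAt).congr
      (fun y hy => hFeq y hy) (hFeq t ht)
  · intro t ht
    apply FF'f_hasDerivWithinAt hnbc hn'bc l κ ω
    apply ofReal_comp_within
    exact (hd t ht).congr (fun y hy => (hnbeq hy).symm) (hnbeq ht).symm
  · exact FF''f_continuousOn hnbc hn'bc l κ ω hc'
  · intro t ht
    rw [hFeq t ht, FFf]
    have hκ0 : (0:ℝ) ≤ |N 0| / (4 * |ω|) := by positivity
    have b1 : ‖-(hhf nb l t)‖ ≤ E * (CP / |ω|) := by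
      rw [norm_neg]; exact hhnb t ht
    have b2 : ‖κ * (Complex.exp (l * t) - Complex.exp (-(Complex.I * (ω:ℂ)) * t))‖
        ≤ |N 0| / (4 * |ω|) * (E + 1) := by
      rw [norm_mul]
      apply mul_le_mul hκb _ (norm_nonneg _) hκ0
      calc ‖Complex.exp (l * t) - Complex.exp (-(Complex.I * (ω:ℂ)) * t)‖
          ≤ ‖Complex.exp (l * t)‖ + ‖Complex.exp (-(Complex.I * (ω:ℂ)) * t)‖ :=
            norm_sub_le _ _
        _ ≤ E + 1 := by
            apply add_le_add (hexpl t ht)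
            rw [hexpi t]
    have b3 : ‖(Real.cos (ω * t) : ℂ) * UUf n'b l ω t‖ ≤ T * (E * (CQ / |ω|)) := by
      rw [norm_mul]
      calc ‖((Real.cos (ω * t) : ℝ) : ℂ)‖ * ‖UUf n'b l ω t‖
          ≤ 1 * (T * (E * (CQ / |ω|))) := by
            apply mul_le_mul _ (hUb t ht) (norm_nonneg _) one_pos.le
            rw [Complex.norm_real, Real.norm_eq_abs]
            exact Real.abs_cos_le_one _
        _ = T * (E * (CQ / |ω|)) := one_mul _
    have b4 : ‖(Real.sin (ω * t) : ℂ) * VVf n'b l ω t‖ ≤ T * (E * (CQ / |ω|)) := by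
      rw [norm_mul]
      calc ‖((Real.sin (ω * t) : ℝ) : ℂ)‖ * ‖VVf n'b l ω t‖
          ≤ 1 * (T * (E * (CQ / |ω|))) := by
            apply mul_le_mul _ (hVb t ht) (norm_nonneg _) one_pos.le
            rw [Complex.norm_real, Real.norm_eq_abs]
            exact Real.abs_sin_le_one _
        _ = T * (E * (CQ / |ω|)) := one_mul _
    refine le_trans (tri4 _ _ _ _) ?_
    have heq1 : E * (CP / |ω|) + |N 0| / (4 * |ω|) * (E + 1)
        + T * (E * (CQ / |ω|)) + T * (E * (CQ / |ω|))
        = (E * CP + |N 0| * (E + 1) / 4 + 2 * T * E * CQ) / |ω| := by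
      field_simp
      ring
    have hle2 : (E * CP + |N 0| * (E + 1) / 4 + 2 * T * E * CQ) / |ω| ≤ c / |ω| := by
      apply (div_le_div_iff_of_pos_right hω0).2
      rw [hc]
      linarith
    linarith [b1, b2, b3, b4]
  · intro t ht
    rw [FF'f]
    have hNt : ‖((nb t : ℝ) : ℂ)‖ ≤ Mn := by
      rw [Complex.norm_real, Real.norm_eq_abs, ← hnbeq ht]
      exact hMn t ht
    have hN't : ‖((n'b t : ℝ) : ℂ)‖ ≤ Mn' := by
      rw [Complex.norm_real, Real.norm_eq_abs, ← hn'beq ht]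
      exact hMn' t ht
    have b1' : ‖l * hhf nb l t + ((nb t : ℝ) : ℂ)‖ ≤ (1 + |ν|) * (E * CP) + Mn := by
      refine le_trans (norm_add_le _ _) ?_
      apply add_le_add _ hNt
      rw [norm_mul]
      calc ‖l‖ * ‖hhf nb l t‖ ≤ ((1 + |ν|) * |ω|) * (E * (CP / |ω|)) :=
            mul_le_mul hlle (hhnb t ht) (norm_nonneg _) (by positivity)
        _ = (1 + |ν|) * (E * CP) := by field_simp
    have b1 : ‖-(l * hhf nb l t + ((nb t : ℝ) : ℂ))‖ ≤ (1 + |ν|) * (E * CP) + Mn := by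
      rw [norm_neg]; exact b1'
    have b2 : ‖κ * (l * Complex.exp (l * t)
        + Complex.I * (ω:ℂ) * Complex.exp (-(Complex.I * (ω:ℂ)) * t))‖
        ≤ |N 0| * ((1 + |ν|) * E + 1) / 4 := by
      rw [norm_mul]
      calc ‖κ‖ * ‖l * Complex.exp (l * t)
            + Complex.I * (ω:ℂ) * Complex.exp (-(Complex.I * (ω:ℂ)) * t)‖
          ≤ (|N 0| / (4 * |ω|)) * ((1 + |ν|) * |ω| * E + |ω|) := by
            apply mul_le_mul hκb _ (norm_nonneg _) (by positivity)
            refine le_trans (norm_add_le _ _) ?_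
            apply add_le_add
            · rw [norm_mul]
              exact mul_le_mul hlle (hexpl t ht) (norm_nonneg _) (by positivity)
            · rw [norm_mul]
              rw [hexpi t, mul_one, norm_mul, Complex.norm_I, one_mul,
                Complex.norm_real, Real.norm_eq_abs]
        _ = |N 0| * ((1 + |ν|) * E + 1) / 4 := by field_simp
    have b3 : ‖(ω : ℂ) * ((Real.cos (ω * t) : ℂ) * VVf n'b l ω t
        - (Real.sin (ω * t) : ℂ) * UUf n'b l ω t)‖ ≤ 2 * (T * (E * CQ)) := by
      rw [norm_mul]
      have hV1 : ‖(Real.cos (ω * t) : ℂ) * VVf n'b l ω t‖ ≤ T * (E * (CQ / |ω|)) := by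
        rw [norm_mul]
        calc ‖((Real.cos (ω * t) : ℝ) : ℂ)‖ * ‖VVf n'b l ω t‖
            ≤ 1 * (T * (E * (CQ / |ω|))) := by
              apply mul_le_mul _ (hVb t ht) (norm_nonneg _) one_pos.le
              rw [Complex.norm_real, Real.norm_eq_abs]
              exact Real.abs_cos_le_one _
          _ = T * (E * (CQ / |ω|)) := one_mul _
      have hU1 : ‖(Real.sin (ω * t) : ℂ) * UUf n'b l ω t‖ ≤ T * (E * (CQ / |ω|)) := by
        rw [norm_mul]
        calc ‖((Real.sin (ω * t) : ℝ) : ℂ)‖ * ‖UUf n'b l ω t‖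
            ≤ 1 * (T * (E * (CQ / |ω|))) := by
              apply mul_le_mul _ (hUb t ht) (norm_nonneg _) one_pos.le
              rw [Complex.norm_real, Real.norm_eq_abs]
              exact Real.abs_sin_le_one _
          _ = T * (E * (CQ / |ω|)) := one_mul _
      calc ‖(ω : ℂ)‖ * ‖(Real.cos (ω * t) : ℂ) * VVf n'b l ω t
            - (Real.sin (ω * t) : ℂ) * UUf n'b l ω t‖
          ≤ |ω| * (T * (E * (CQ / |ω|)) + T * (E * (CQ / |ω|))) := by
            apply mul_le_mul _ _ (norm_nonneg _) (abs_nonneg _)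
            · rw [Complex.norm_real, Real.norm_eq_abs]
            · exact le_trans (norm_sub_le _ _) (add_le_add hV1 hU1)
        _ = 2 * (T * (E * CQ)) := by field_simp; ring
    have b4 : ‖hhf n'b l t‖ ≤ E * CQ := by
      refine le_trans (hhn'b t ht) ?_
      apply mul_le_mul_of_nonneg_left _ hE0.le
      exact div_le_self hCQ0 hω
    refine le_trans (tri4 _ _ _ _) ?_
    rw [hc₇]
    linarith [b1, b2, b3, b4]
  · intro t ht
    rw [FF''f]
    have hNt : ‖((nb t : ℝ) : ℂ)‖ ≤ Mn := by
      rw [Complex.norm_real, Real.norm_eq_abs, ← hnbeq ht]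
      exact hMn t ht
    have hN'bt : ‖((n'b t : ℝ) : ℂ)‖ ≤ Mn' := by
      rw [Complex.norm_real, Real.norm_eq_abs, ← hn'beq ht]
      exact hMn' t ht
    have b1' : ‖l * hhf nb l t + ((nb t : ℝ) : ℂ)‖ ≤ (1 + |ν|) * (E * CP) + Mn := by
      refine le_trans (norm_add_le _ _) ?_
      apply add_le_add _ hNt
      rw [norm_mul]
      calc ‖l‖ * ‖hhf nb l t‖ ≤ ((1 + |ν|) * |ω|) * (E * (CP / |ω|)) :=
            mul_le_mul hlle (hhnb t ht) (norm_nonneg _) (by positivity)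
        _ = (1 + |ν|) * (E * CP) := by field_simp
    have s1 : ‖-(l * (l * hhf nb l t + ((nb t : ℝ) : ℂ)))‖
        ≤ (1 + |ν|) * ((1 + |ν|) * (E * CP) + Mn) * |ω| := by
      rw [norm_neg, norm_mul]
      calc ‖l‖ * ‖l * hhf nb l t + ((nb t : ℝ) : ℂ)‖
          ≤ ((1 + |ν|) * |ω|) * ((1 + |ν|) * (E * CP) + Mn) :=
            mul_le_mul hlle b1' (norm_nonneg _) (by positivity)
        _ = (1 + |ν|) * ((1 + |ν|) * (E * CP) + Mn) * |ω| := by ring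
    have s2 : ‖κ * (l ^ 2 * Complex.exp (l * t)
        + (ω : ℂ) ^ 2 * Complex.exp (-(Complex.I * (ω:ℂ)) * t))‖
        ≤ |N 0| * ((1 + |ν|) * ((1 + |ν|) * E) + 1) / 4 * |ω| := by
      rw [norm_mul]
      calc ‖κ‖ * ‖l ^ 2 * Complex.exp (l * t)
            + (ω : ℂ) ^ 2 * Complex.exp (-(Complex.I * (ω:ℂ)) * t)‖
          ≤ (|N 0| / (4 * |ω|)) * (((1 + |ν|) * |ω|) ^ 2 * E + |ω| ^ 2) := by
            apply mul_le_mul hκb _ (norm_nonneg _) (by positivity)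
            refine le_trans (norm_add_le _ _) ?_
            apply add_le_add
            · rw [norm_mul, norm_pow]
              apply mul_le_mul _ (hexpl t ht) (norm_nonneg _) (by positivity)
              exact pow_le_pow_left₀ (norm_nonneg _) hlle 2
            · rw [norm_mul, hexpi t, mul_one, norm_pow,
                Complex.norm_real, Real.norm_eq_abs]
        _ = |N 0| * ((1 + |ν|) * ((1 + |ν|) * E) + 1) / 4 * |ω| * (|ω| / |ω|) := by
            ring
        _ = |N 0| * ((1 + |ν|) * ((1 + |ν|) * E) + 1) / 4 * |ω| := by
            rw [div_self hω0.ne', mul_one]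
    have s3 : ‖(ω : ℂ) ^ 2 * ((Real.sin (ω * t) : ℂ) * VVf n'b l ω t
        + (Real.cos (ω * t) : ℂ) * UUf n'b l ω t)‖ ≤ 2 * (T * (E * CQ)) * |ω| := by
      rw [norm_mul]
      have hV1 : ‖(Real.sin (ω * t) : ℂ) * VVf n'b l ω t‖ ≤ T * (E * (CQ / |ω|)) := by
        rw [norm_mul]
        calc ‖((Real.sin (ω * t) : ℝ) : ℂ)‖ * ‖VVf n'b l ω t‖
            ≤ 1 * (T * (E * (CQ / |ω|))) := by
              apply mul_le_mul _ (hVb t ht) (norm_nonneg _) one_pos.le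
              rw [Complex.norm_real, Real.norm_eq_abs]
              exact Real.abs_sin_le_one _
          _ = T * (E * (CQ / |ω|)) := one_mul _
      have hU1 : ‖(Real.cos (ω * t) : ℂ) * UUf n'b l ω t‖ ≤ T * (E * (CQ / |ω|)) := by
        rw [norm_mul]
        calc ‖((Real.cos (ω * t) : ℝ) : ℂ)‖ * ‖UUf n'b l ω t‖
            ≤ 1 * (T * (E * (CQ / |ω|))) := by
              apply mul_le_mul _ (hUb t ht) (norm_nonneg _) one_pos.le
              rw [Complex.norm_real, Real.norm_eq_abs]
              exact Real.abs_cos_le_one _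
          _ = T * (E * (CQ / |ω|)) := one_mul _
      calc ‖(ω : ℂ) ^ 2‖ * ‖(Real.sin (ω * t) : ℂ) * VVf n'b l ω t
            + (Real.cos (ω * t) : ℂ) * UUf n'b l ω t‖
          ≤ |ω| ^ 2 * (T * (E * (CQ / |ω|)) + T * (E * (CQ / |ω|))) := by
            apply mul_le_mul _ _ (norm_nonneg _) (by positivity)
            · rw [norm_pow, Complex.norm_real, Real.norm_eq_abs]
            · exact le_trans (norm_add_le _ _) (add_le_add hV1 hU1)
        _ = 2 * (T * (E * CQ)) * |ω| * (|ω| / |ω|) := by ring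
        _ = 2 * (T * (E * CQ)) * |ω| := by rw [div_self hω0.ne', mul_one]
    have s4 : ‖l * hhf n'b l t + ((n'b t : ℝ) : ℂ)‖ ≤ (1 + |ν|) * (E * CQ) + Mn' := by
      refine le_trans (norm_add_le _ _) ?_
      apply add_le_add _ hN'bt
      rw [norm_mul]
      calc ‖l‖ * ‖hhf n'b l t‖ ≤ ((1 + |ν|) * |ω|) * (E * (CQ / |ω|)) :=
            mul_le_mul hlle (hhn'b t ht) (norm_nonneg _) (by positivity)
        _ = (1 + |ν|) * (E * CQ) := by field_simp
    have s5 : ‖((N' t : ℝ) : ℂ)‖ ≤ Mn' := by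
      rw [Complex.norm_real, Real.norm_eq_abs]
      exact hMn' t ht
    refine le_trans (tri5 _ _ _ _ _) ?_
    have hn4 : (0:ℝ) ≤ (1 + |ν|) * (E * CQ) + Mn' :=
      add_nonneg (mul_nonneg (by positivity) (mul_nonneg hE0.le hCQ0)) hMn'0
    have m4 : (1 + |ν|) * (E * CQ) + Mn' ≤ ((1 + |ν|) * (E * CQ) + Mn') * |ω| := by
      have := mul_nonneg hn4 (sub_nonneg.2 hω)
      nlinarith
    have m5 : Mn' ≤ Mn' * |ω| := by
      have := mul_nonneg hMn'0 (sub_nonneg.2 hω)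
      nlinarith
    have expand : c₈ * |ω| = (1 + |ν|) * ((1 + |ν|) * (E * CP) + Mn) * |ω|
        + |N 0| * ((1 + |ν|) * ((1 + |ν|) * E) + 1) / 4 * |ω|
        + 2 * (T * (E * CQ)) * |ω|
        + ((1 + |ν|) * (E * CQ) + Mn') * |ω| + Mn' * |ω| + 1 * |ω| := by
      rw [hc₈]; ring
    rw [expand]
    have : (0:ℝ) ≤ 1 * |ω| := by linarith
    linarith [s1, s2, s3, s4, s5, m4, m5]
end

section
/- Let T > 0, let N : [0,T] → ℝ be continuous, and let ω_1, …, ω_{n₀} be complex numbers with ω_n ≠ 0 for each n and ω_n² pairwise distinct. If complex coefficients a_n^± (1 ≤ n ≤ n₀, both signs) satisfy Σ_{n=1}^{n₀} ( a_n^+·e(t;ω_n) + a_n^−·e(t;−ω_n) ) = 0 for all t ∈ [0,T], then a_n^+ = a_n^− = 0 for every n. -/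
open MeasureTheory Set Complex Filter
open scoped Classical

set_option maxHeartbeats 1000000

-- Volterra uniqueness
lemma volterra_zero' {T : ℝ} (hT : 0 < T) {N : ℝ → ℝ} (hN : ContinuousOn N (Icc (0:ℝ) T))
    {f : ℝ → ℂ} (hf : ContinuousOn f (Icc (0:ℝ) T))
    (heq : ∀ t ∈ Icc (0:ℝ) T, f t = -∫ τ in (0:ℝ)..t, (N (t - τ) : ℂ) * f τ) :
    ∀ t ∈ Icc (0:ℝ) T, f t = 0 := by
  obtain ⟨M, hM⟩ := isCompact_Icc.exists_bound_of_continuousOn hN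
  set K : ℝ := max M 0 with hK
  have hK0 : 0 ≤ K := le_max_right _ _
  have hNK : ∀ s ∈ Icc (0:ℝ) T, |N s| ≤ K := fun s hs => le_trans (hM s hs) (le_max_left _ _)
  set g : ℝ → ℝ := fun s => ‖f s‖ with hg
  have hgc : ContinuousOn g (Icc (0:ℝ) T) := hf.norm
  set φ : ℝ → ℝ := fun t => ∫ s in (0:ℝ)..t, g s with hφ
  have hgint : ∀ t ∈ Icc (0:ℝ) T, IntervalIntegrable g volume 0 t := by
    intro t ht
    apply ContinuousOn.intervalIntegrable
    rw [uIcc_of_le ht.1]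
    exact hgc.mono (Icc_subset_Icc le_rfl ht.2)
  have hφ0 : φ 0 = 0 := intervalIntegral.integral_same
  have hφnn : ∀ t ∈ Icc (0:ℝ) T, 0 ≤ φ t := by
    intro t ht
    exact intervalIntegral.integral_nonneg ht.1 (fun u _ => norm_nonneg _)
  -- key pointwise bound
  have key : ∀ t ∈ Icc (0:ℝ) T, ‖f t‖ ≤ K * φ t := by
    intro t ht
    have h1 : ‖f t‖ = ‖∫ τ in (0:ℝ)..t, (N (t - τ) : ℂ) * f τ‖ := by
      rw [heq t ht, norm_neg]
    have hint1 : ContinuousOn (fun τ => (N (t - τ) : ℂ) * f τ) (Icc 0 t) := by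
      have hNc : ContinuousOn (fun τ : ℝ => N (t - τ)) (Icc 0 t) := by
        apply hN.comp (continuous_const.sub continuous_id).continuousOn
        intro τ hτ
        rw [mem_Icc] at hτ
        simp only [id_eq, mem_Icc, Pi.sub_apply]
        exact ⟨by linarith [hτ.2], by linarith [hτ.1, ht.2]⟩
      exact (Complex.continuous_ofReal.comp_continuousOn hNc).mul
        (hf.mono (Icc_subset_Icc le_rfl ht.2))
    have h2 : ‖∫ τ in (0:ℝ)..t, (N (t - τ) : ℂ) * f τ‖
        ≤ ∫ τ in (0:ℝ)..t, ‖(N (t - τ) : ℂ) * f τ‖ :=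
      intervalIntegral.norm_integral_le_integral_norm ht.1
    have h3 : (∫ τ in (0:ℝ)..t, ‖(N (t - τ) : ℂ) * f τ‖) ≤ ∫ τ in (0:ℝ)..t, K * g τ := by
      apply intervalIntegral.integral_mono_on ht.1
      · apply ContinuousOn.intervalIntegrable
        rw [uIcc_of_le ht.1]; exact hint1.norm
      · apply ContinuousOn.intervalIntegrable
        rw [uIcc_of_le ht.1]
        exact continuousOn_const.mul (hgc.mono (Icc_subset_Icc le_rfl ht.2))
      · intro x hx
        rw [norm_mul, Complex.norm_real]
        apply mul_le_mul_of_nonneg_right _ (norm_nonneg _)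
        rw [mem_Icc] at hx
        exact hNK _ ⟨by linarith [hx.2], by linarith [hx.1, ht.2]⟩
    have h4 : (∫ τ in (0:ℝ)..t, K * g τ) = K * φ t := intervalIntegral.integral_const_mul _ _
    calc ‖f t‖ = _ := h1
    _ ≤ _ := h2
    _ ≤ _ := h3
    _ = K * φ t := h4
  -- Gronwall on φ
  have hφcont : ContinuousOn φ (Icc (0:ℝ) T) := by
    have : IntegrableOn g (uIcc 0 T) volume := by
      rw [uIcc_of_le hT.le]
      exact hgc.integrableOn_compact isCompact_Icc
    have := intervalIntegral.continuousOn_primitive_interval this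
    rwa [uIcc_of_le hT.le] at this
  have hφderiv : ∀ t ∈ Ico (0:ℝ) T, HasDerivWithinAt φ (g t) (Ici t) t := by
    intro t ht
    have htT : t < T := ht.2
    have hmem : Ioi t ∩ Iio T ∈ nhdsWithin t (Ioi t) := inter_mem_nhdsWithin _ (Iio_mem_nhds htT)
    have hsub : Ioi t ∩ Iio T ⊆ Icc (0:ℝ) T := fun x hx =>
      ⟨le_trans ht.1 (le_of_lt hx.1), hx.2.le⟩
    apply intervalIntegral.integral_hasDerivWithinAt_right
      (hgint t ⟨ht.1, htT.le⟩)
    · exact ⟨Ioi t ∩ Iio T, hmem, (hgc.mono hsub).aestronglyMeasurable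
        (measurableSet_Ioi.inter measurableSet_Iio)⟩
    · exact (hgc.continuousWithinAt ⟨ht.1, htT.le⟩).mono_of_mem_nhdsWithin
        (mem_of_superset hmem hsub)
  have hbound : ∀ t ∈ Ico (0:ℝ) T, ‖g t‖ ≤ K * ‖φ t‖ + 0 := by
    intro t ht
    have h1 := key t ⟨ht.1, ht.2.le⟩
    have h2 : |g t| = g t := _root_.abs_of_nonneg (norm_nonneg (f t))
    rw [add_zero, Real.norm_eq_abs, Real.norm_eq_abs, h2,
      _root_.abs_of_nonneg (hφnn t ⟨ht.1, ht.2.le⟩)]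
    exact h1
  have hφ0' : ‖φ 0‖ ≤ 0 := by rw [hφ0]; simp
  have := norm_le_gronwallBound_of_norm_deriv_right_le hφcont hφderiv hφ0' hbound
  intro t ht
  have h2 := this t ht
  rw [gronwallBound_ε0_δ0] at h2
  have hφt : φ t = 0 := by
    have := hφnn t ht
    have : |φ t| ≤ 0 := by rwa [Real.norm_eq_abs] at h2
    cases abs_le.mp this with
    | intro h1 h2 => linarith [hφnn t ht]
  have := key t ht
  rw [hφt, mul_zero] at this
  exact norm_le_zero_iff.mp this

-- Vandermonde
lemma vandermonde_coeffs_zero {n₀ : ℕ} (z : Fin n₀ → ℂ) (hz : Function.Injective z)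
    (c : Fin n₀ → ℂ) (h : ∀ k : ℕ, ∑ n, c n * z n ^ k = 0) : ∀ n, c n = 0 := by
  intro m
  set Q : Polynomial ℂ := ∏ j ∈ Finset.univ.erase m, (Polynomial.X - Polynomial.C (z j)) with hQ
  have hsum : ∑ n, c n * Q.eval (z n) = 0 := by
    have heval : ∀ n : Fin n₀, c n * Q.eval (z n)
        = ∑ k ∈ Finset.range (Q.natDegree + 1), Q.coeff k * (c n * z n ^ k) := by
      intro n
      rw [Polynomial.eval_eq_sum_range, Finset.mul_sum]
      exact Finset.sum_congr rfl fun k _ => by ring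
    rw [Finset.sum_congr rfl fun n _ => heval n, Finset.sum_comm]
    refine Finset.sum_eq_zero fun k _ => ?_
    rw [← Finset.mul_sum, h k, mul_zero]
  have hz0 : ∀ n ∈ Finset.univ, n ≠ m → c n * Q.eval (z n) = 0 := by
    intro n _ hnm
    have : Q.eval (z n) = 0 := by
      rw [hQ, Polynomial.eval_prod]
      apply Finset.prod_eq_zero (Finset.mem_erase.mpr ⟨hnm, Finset.mem_univ n⟩)
      simp
    rw [this, mul_zero]
  rw [Finset.sum_eq_single m hz0 (fun h => absurd (Finset.mem_univ m) h)] at hsum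
  have hQm : Q.eval (z m) ≠ 0 := by
    rw [hQ, Polynomial.eval_prod]
    apply Finset.prod_ne_zero_iff.mpr
    intro j hj
    simp only [Polynomial.eval_sub, Polynomial.eval_X, Polynomial.eval_C]
    exact sub_ne_zero.mpr fun hh => (Finset.mem_erase.mp hj).1 (hz hh).symm
  exact (mul_eq_zero.mp hsum).resolve_right hQm

-- derivative of zero function
lemma derivWithin_zero_of_zero {T : ℝ} (hT : 0 < T) {u u' : ℝ → ℂ}
    (hd : ∀ t ∈ Icc (0:ℝ) T, HasDerivWithinAt u (u' t) (Icc (0:ℝ) T) t)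
    (hz : ∀ t ∈ Icc (0:ℝ) T, u t = 0) : ∀ t ∈ Icc (0:ℝ) T, u' t = 0 := by
  intro t ht
  have hu : UniqueDiffWithinAt ℝ (Icc (0:ℝ) T) t := (uniqueDiffOn_Icc hT) t ht
  have h1 := (hd t ht).derivWithin hu
  have h2 : derivWithin u (Icc (0:ℝ) T) t = derivWithin (fun _ => (0:ℂ)) (Icc (0:ℝ) T) t :=
    derivWithin_congr (fun x hx => hz x hx) (hz t ht)
  rw [h2, derivWithin_fun_const _ _] at h1
  exact h1.symm

/-- Step A of Lemma 5: any finite family of quasi-exponentials with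
nonzero `ω_n` and pairwise distinct `ω_n²` is linearly independent on `[0,T]`. -/
theorem quasi_exponentials_finite_independence
    (T : ℝ) (hT : 0 < T) (N : ℝ → ℝ) (hNc : ContinuousOn N (Icc (0:ℝ) T))
    (n₀ : ℕ) (ω : Fin n₀ → ℂ) (hω0 : ∀ n, ω n ≠ 0)
    (hω2 : Function.Injective (fun n => (ω n) ^ 2))
    (e : Fin n₀ → Bool → ℝ → ℂ)
    (he : ∀ n b, IsQuasiExp T N (sgn b * ω n) (e n b))
    (a : Fin n₀ → Bool → ℂ)
    (hzero : ∀ t ∈ Icc (0:ℝ) T,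
      ∑ n : Fin n₀, (a n true * e n true t + a n false * e n false t) = 0) :
    ∀ n b, a n b = 0 := by
  simp only [IsQuasiExp, SolvesMemoryODE, SolvesMemoryODEWith] at he
  choose e' e'' hde hde' hcont hode h0 h1 using he
  have hec : ∀ n b, ContinuousOn (e n b) (Icc (0:ℝ) T) :=
    fun n b t ht => (hde n b t ht).continuousWithinAt
  have hsq : ∀ (n : Fin n₀) (b : Bool), (sgn b * ω n) ^ 2 = ω n ^ 2 := by
    intro n b; cases b <;> simp [sgn]
  have hode' : ∀ n b, ∀ t ∈ Icc (0:ℝ) T,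
      e'' n b t = -(ω n ^ 2 * e n b t)
        - ω n ^ 2 * ∫ τ in (0:ℝ)..t, (N (t - τ) : ℂ) * e n b τ := by
    intro n b t ht
    have h := hode n b t ht
    rw [hsq n b] at h
    linear_combination h
  -- generic derivative facts for linear combinations
  have hFd : ∀ (c : Fin n₀ → Bool → ℂ), ∀ t ∈ Icc (0:ℝ) T,
      HasDerivWithinAt (fun s => ∑ n : Fin n₀, ∑ b : Bool, c n b * e n b s)
        (∑ n : Fin n₀, ∑ b : Bool, c n b * e' n b t) (Icc (0:ℝ) T) t := by
    intro c t ht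
    apply HasDerivWithinAt.fun_sum; intro n _
    apply HasDerivWithinAt.fun_sum; intro b _
    exact (hde n b t ht).const_mul _
  have hGd : ∀ (c : Fin n₀ → Bool → ℂ), ∀ t ∈ Icc (0:ℝ) T,
      HasDerivWithinAt (fun s => ∑ n : Fin n₀, ∑ b : Bool, c n b * e' n b s)
        (∑ n : Fin n₀, ∑ b : Bool, c n b * e'' n b t) (Icc (0:ℝ) T) t := by
    intro c t ht
    apply HasDerivWithinAt.fun_sum; intro n _
    apply HasDerivWithinAt.fun_sum; intro b _
    exact (hde' n b t ht).const_mul _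
  -- integrability of convolution terms
  have hint : ∀ n b, ∀ t ∈ Icc (0:ℝ) T,
      IntervalIntegrable (fun τ => (N (t - τ) : ℂ) * e n b τ) volume 0 t := by
    intro n b t ht
    apply ContinuousOn.intervalIntegrable
    rw [uIcc_of_le ht.1]
    have hNco : ContinuousOn (fun τ : ℝ => N (t - τ)) (Icc 0 t) := by
      apply hNc.comp (continuous_const.sub continuous_id).continuousOn
      intro τ hτ
      rw [mem_Icc] at hτ
      simp only [id_eq, mem_Icc, Pi.sub_apply]
      exact ⟨by linarith [hτ.2], by linarith [hτ.1, ht.2]⟩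
    exact (Complex.continuous_ofReal.comp_continuousOn hNco).mul
      ((hec n b).mono (Icc_subset_Icc le_rfl ht.2))
  -- main inductive claim
  have main : ∀ k, ∀ t ∈ Icc (0:ℝ) T,
      ∑ n : Fin n₀, ∑ b : Bool, (a n b * (ω n ^ 2) ^ k) * e n b t = 0 := by
    intro k
    induction k with
    | zero =>
      intro t ht
      calc ∑ n : Fin n₀, ∑ b : Bool, (a n b * (ω n ^ 2) ^ 0) * e n b t
          = ∑ n : Fin n₀, (a n true * e n true t + a n false * e n false t) := by
            refine Finset.sum_congr rfl fun n _ => ?_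
            rw [Fintype.sum_bool]; ring
        _ = 0 := hzero t ht
    | succ k ih =>
      have hGk := derivWithin_zero_of_zero hT (hFd (fun n b => a n b * (ω n ^ 2) ^ k)) ih
      have hHk := derivWithin_zero_of_zero hT (hGd (fun n b => a n b * (ω n ^ 2) ^ k)) hGk
      -- Volterra equation for the next level
      have heqf : ∀ t ∈ Icc (0:ℝ) T,
          (∑ n : Fin n₀, ∑ b : Bool, (a n b * (ω n ^ 2) ^ (k+1)) * e n b t)
          = -∫ τ in (0:ℝ)..t, (N (t - τ) : ℂ) *
              ∑ n : Fin n₀, ∑ b : Bool, (a n b * (ω n ^ 2) ^ (k+1)) * e n b τ := by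
        intro t ht
        -- swap integral and sums
        have hptw : ∀ τ, (N (t - τ) : ℂ) *
              ∑ n : Fin n₀, ∑ b : Bool, (a n b * (ω n ^ 2) ^ (k+1)) * e n b τ
            = ∑ n : Fin n₀, ∑ b : Bool,
                (a n b * (ω n ^ 2) ^ (k+1)) * ((N (t - τ) : ℂ) * e n b τ) := by
          intro τ
          rw [Finset.mul_sum]
          refine Finset.sum_congr rfl fun n _ => ?_
          rw [Finset.mul_sum]
          refine Finset.sum_congr rfl fun b _ => ?_
          ring
        have hi1 : ∀ (n : Fin n₀) (b : Bool), IntervalIntegrable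
            (fun τ => (a n b * (ω n ^ 2) ^ (k+1)) * ((N (t - τ) : ℂ) * e n b τ)) volume 0 t :=
          fun n b => (hint n b t ht).const_mul _
        have hi2 : ∀ n : Fin n₀, IntervalIntegrable
            (fun τ => ∑ b : Bool, (a n b * (ω n ^ 2) ^ (k+1)) * ((N (t - τ) : ℂ) * e n b τ))
            volume 0 t :=
          fun n => IntervalIntegrable.sum (Finset.univ : Finset Bool)
            (f := fun b τ => (a n b * (ω n ^ 2) ^ (k+1)) * ((N (t - τ) : ℂ) * e n b τ))
            (fun b _ => hi1 n b)
        have hswap : (∫ τ in (0:ℝ)..t, (N (t - τ) : ℂ) *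
              ∑ n : Fin n₀, ∑ b : Bool, (a n b * (ω n ^ 2) ^ (k+1)) * e n b τ)
            = ∑ n : Fin n₀, ∑ b : Bool, (a n b * (ω n ^ 2) ^ (k+1)) *
                ∫ τ in (0:ℝ)..t, (N (t - τ) : ℂ) * e n b τ := by
          calc (∫ τ in (0:ℝ)..t, (N (t - τ) : ℂ) *
                  ∑ n : Fin n₀, ∑ b : Bool, (a n b * (ω n ^ 2) ^ (k+1)) * e n b τ)
              = ∫ τ in (0:ℝ)..t, ∑ n : Fin n₀, ∑ b : Bool,
                  (a n b * (ω n ^ 2) ^ (k+1)) * ((N (t - τ) : ℂ) * e n b τ) := by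
                simp only [hptw]
            _ = ∑ n : Fin n₀, ∫ τ in (0:ℝ)..t, ∑ b : Bool,
                  (a n b * (ω n ^ 2) ^ (k+1)) * ((N (t - τ) : ℂ) * e n b τ) :=
                intervalIntegral.integral_finset_sum (fun n _ => hi2 n)
            _ = ∑ n : Fin n₀, ∑ b : Bool, ∫ τ in (0:ℝ)..t,
                  (a n b * (ω n ^ 2) ^ (k+1)) * ((N (t - τ) : ℂ) * e n b τ) :=
                Finset.sum_congr rfl fun n _ =>
                  intervalIntegral.integral_finset_sum (fun b _ => hi1 n b)
            _ = ∑ n : Fin n₀, ∑ b : Bool, (a n b * (ω n ^ 2) ^ (k+1)) *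
                  ∫ τ in (0:ℝ)..t, (N (t - τ) : ℂ) * e n b τ :=
                Finset.sum_congr rfl fun n _ => Finset.sum_congr rfl fun b _ =>
                  intervalIntegral.integral_const_mul _ _
        rw [hswap]
        -- use the ODE
        have h3 : ∑ n : Fin n₀, ∑ b : Bool,
            ((a n b * (ω n ^ 2) ^ k) * e'' n b t
              + ((a n b * (ω n ^ 2) ^ (k+1)) * e n b t
                + (a n b * (ω n ^ 2) ^ (k+1)) *
                    ∫ τ in (0:ℝ)..t, (N (t - τ) : ℂ) * e n b τ)) = 0 := by
          refine Finset.sum_eq_zero fun n _ => Finset.sum_eq_zero fun b _ => ?_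
          rw [hode' n b t ht]
          ring
        simp only [Finset.sum_add_distrib] at h3
        linear_combination h3 - hHk t ht
      have hfc : ContinuousOn
          (fun s => ∑ n : Fin n₀, ∑ b : Bool, (a n b * (ω n ^ 2) ^ (k+1)) * e n b s)
          (Icc (0:ℝ) T) :=
        fun t ht => (hFd (fun n b => a n b * (ω n ^ 2) ^ (k+1)) t ht).continuousWithinAt
      exact volterra_zero' hT hNc hfc heqf
  -- evaluate at zero
  have h0T : (0:ℝ) ∈ Icc (0:ℝ) T := ⟨le_rfl, hT.le⟩
  have hG0 : ∀ k, ∀ t ∈ Icc (0:ℝ) T,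
      ∑ n : Fin n₀, ∑ b : Bool, (a n b * (ω n ^ 2) ^ k) * e' n b t = 0 :=
    fun k => derivWithin_zero_of_zero hT (hFd (fun n b => a n b * (ω n ^ 2) ^ k)) (main k)
  have hsum1 : ∀ k : ℕ, ∑ n : Fin n₀, (a n true + a n false) * (ω n ^ 2) ^ k = 0 := by
    intro k
    have h := main k 0 h0T
    have heq1 : ∑ n : Fin n₀, ∑ b : Bool, (a n b * (ω n ^ 2) ^ k) * e n b 0
        = ∑ n : Fin n₀, (a n true + a n false) * (ω n ^ 2) ^ k := by
      refine Finset.sum_congr rfl fun n _ => ?_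
      rw [Fintype.sum_bool, h0 n true, h0 n false]
      ring
    rw [heq1] at h; exact h
  have hsum2 : ∀ k : ℕ,
      ∑ n : Fin n₀, (Complex.I * ω n * (a n true - a n false)) * (ω n ^ 2) ^ k = 0 := by
    intro k
    have h := hG0 k 0 h0T
    have hsgnt : sgn true = 1 := rfl
    have hsgnf : sgn false = -1 := rfl
    have heq2 : ∑ n : Fin n₀, ∑ b : Bool, (a n b * (ω n ^ 2) ^ k) * e' n b 0
        = ∑ n : Fin n₀, (Complex.I * ω n * (a n true - a n false)) * (ω n ^ 2) ^ k := by
      refine Finset.sum_congr rfl fun n _ => ?_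
      rw [Fintype.sum_bool, h1 n true, h1 n false, hsgnt, hsgnf]
      ring
    rw [heq2] at h; exact h
  have hc1 : ∀ n, a n true + a n false = 0 :=
    vandermonde_coeffs_zero (fun n => ω n ^ 2) hω2 (fun n => a n true + a n false) hsum1
  have hc2 : ∀ n, Complex.I * ω n * (a n true - a n false) = 0 :=
    vandermonde_coeffs_zero (fun n => ω n ^ 2) hω2
      (fun n => Complex.I * ω n * (a n true - a n false)) hsum2
  intro n b
  have e1 := hc1 n
  have hdzero : a n true - a n false = 0 := by
    have hIω : Complex.I * ω n ≠ 0 := mul_ne_zero Complex.I_ne_zero (hω0 n)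
    exact (mul_eq_zero.mp (hc2 n)).resolve_left hIω
  cases b
  · linear_combination (e1 - hdzero) / 2
  · linear_combination (e1 + hdzero) / 2
end

section
/- Let T > 0, let N : [0,T] → ℝ be continuously differentiable, and let μ ∈ ℂ. For ω ∈ ℝ define the kernel N*_ω : [0,T] → ℂ by N*_ω(t) = −N(t) + N(0)·cos(ωt) + ∫₀ᵗ cos(ωz)·N′(t−z) dz. Then for every real ω the Volterra integral equation v(t) = e^{iωt} + ∫₀ᵗ e^{−μ(t−s)}·N*_ω(t−s)·v(s) ds has a unique continuous solution v : [0,T] → ℂ, and there is a constant c₃ > 0, depending only on N, T and μ, such that sup_{t∈[0,T]} |v(t)| ≤ c₃ for every real ω. -/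
open MeasureTheory Set Complex Filter
open scoped Classical

/-- the integrated-by-parts kernel `N*_ω`. -/
noncomputable def Nstar (N N' : ℝ → ℝ) (ω t : ℝ) : ℂ :=
  -(N t : ℂ) + (N 0 : ℂ) * (Real.cos (ω * t) : ℂ) +
    ∫ z in (0:ℝ)..t, (Real.cos (ω * z) : ℂ) * (N' (t - z) : ℂ)

lemma my_gronwall_int {g : ℝ → ℝ} {T a M : ℝ} (hg : Continuous g)
    (hg0 : ∀ t, 0 ≤ g t) (ha : 0 ≤ a) (hM : 0 < M)
    (h : ∀ t ∈ Icc (0:ℝ) T, g t ≤ a + M * ∫ s in (0:ℝ)..t, g s) :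
    ∀ t ∈ Icc (0:ℝ) T, g t ≤ a * Real.exp (M * t) := by
  set G : ℝ → ℝ := fun t => ∫ s in (0:ℝ)..t, g s with hGdef
  have hderiv : ∀ t : ℝ, HasDerivAt G (g t) t := fun t =>
    intervalIntegral.integral_hasDerivAt_right (hg.intervalIntegrable _ _)
      hg.aestronglyMeasurable.stronglyMeasurableAtFilter hg.continuousAt
  have hGnn : ∀ t ∈ Icc (0:ℝ) T, 0 ≤ G t := fun t ht =>
    intervalIntegral.integral_nonneg ht.1 fun s _ => hg0 s
  have key : ∀ t ∈ Icc (0:ℝ) T, ‖G t‖ ≤ gronwallBound 0 M a (t - 0) := by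
    apply norm_le_gronwallBound_of_norm_deriv_right_le
    · exact fun t _ => (hderiv t).continuousAt.continuousWithinAt
    · exact fun x _ => (hderiv x).hasDerivWithinAt
    · simp [G]
    · intro x hx
      rw [Real.norm_of_nonneg (hg0 x),
        Real.norm_of_nonneg (hGnn x (mem_of_mem_of_subset hx Ico_subset_Icc_self))]
      have := h x (mem_of_mem_of_subset hx Ico_subset_Icc_self)
      linarith
  intro t ht
  have h1 := key t ht
  rw [Real.norm_of_nonneg (hGnn t ht), sub_zero, gronwallBound_of_K_ne_0 hM.ne'] at h1
  have h2 := h t ht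
  have h3 : (0:ℝ) < Real.exp (M * t) := Real.exp_pos _
  have h4 : G t ≤ a / M * (Real.exp (M * t) - 1) := by linarith [h1]
  calc g t ≤ a + M * G t := h2
    _ ≤ a + M * (a / M * (Real.exp (M * t) - 1)) := by nlinarith
    _ = a * Real.exp (M * t) := by field_simp; ring


/-- the weighted Volterra equation with kernel `e^{-μ(t-s)} N*_ω(t-s)` has
a unique continuous solution, bounded uniformly in the real parameter `ω`. -/
theorem weighted_volterra_unique_uniformly_bounded
    (T : ℝ) (hT : 0 < T) (N N' : ℝ → ℝ)
    (hN : ∀ t ∈ Icc (0:ℝ) T, HasDerivWithinAt N (N' t) (Icc (0:ℝ) T) t)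
    (hN' : ContinuousOn N' (Icc (0:ℝ) T))
    (μ : ℂ) :
    ∃ c₃ > 0, ∀ ω : ℝ,
      ∃ v : ℝ → ℂ,
        ContinuousOn v (Icc (0:ℝ) T) ∧
        (∀ t ∈ Icc (0:ℝ) T,
          v t = Complex.exp (Complex.I * ω * (t : ℂ)) +
            ∫ s in (0:ℝ)..t,
              Complex.exp (-μ * ((t : ℂ) - (s : ℂ))) * Nstar N N' ω (t - s) * v s) ∧
        (∀ t ∈ Icc (0:ℝ) T, ‖v t‖ ≤ c₃) ∧
        (∀ w : ℝ → ℂ, ContinuousOn w (Icc (0:ℝ) T) →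
          (∀ t ∈ Icc (0:ℝ) T,
            w t = Complex.exp (Complex.I * ω * (t : ℂ)) +
              ∫ s in (0:ℝ)..t,
                Complex.exp (-μ * ((t : ℂ) - (s : ℂ))) * Nstar N N' ω (t - s) * w s) →
          ∀ t ∈ Icc (0:ℝ) T, w t = v t) := by
  have hT0 : (0:ℝ) ≤ T := hT.le
  have hNc : ContinuousOn N (Icc (0:ℝ) T) := fun t ht => (hN t ht).continuousWithinAt
  -- projection onto [0,T]
  set π : ℝ → ℝ := fun s => max 0 (min s T) with hπdef
  have hπc : Continuous π := continuous_const.max (continuous_id.min continuous_const)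
  have hπmem : ∀ s, π s ∈ Icc (0:ℝ) T := fun s =>
    ⟨le_max_left _ _, max_le hT0 (min_le_right _ _)⟩
  have hπid : ∀ s ∈ Icc (0:ℝ) T, π s = s := fun s hs => by
    simp only [hπdef, min_eq_left hs.2, max_eq_right hs.1]
  -- extended kernels
  set Ne : ℝ → ℝ := fun t => N (π t) with hNedef
  set Ne' : ℝ → ℝ := fun t => N' (π t) with hNe'def
  have hNec : Continuous Ne := hNc.comp_continuous hπc hπmem
  have hNe'c : Continuous Ne' := hN'.comp_continuous hπc hπmem
  -- uniform bound on Ne, Ne'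
  obtain ⟨C₁, hC₁⟩ := isCompact_Icc.exists_bound_of_continuousOn hNc
  obtain ⟨C₂, hC₂⟩ := isCompact_Icc.exists_bound_of_continuousOn hN'
  set C : ℝ := max C₁ C₂ with hCdef
  have hC0 : 0 ≤ C := le_trans (norm_nonneg (N 0))
    (le_trans (hC₁ 0 (left_mem_Icc.2 hT0)) (le_max_left _ _))
  have hNeB : ∀ t, |Ne t| ≤ C := fun t =>
    le_trans (hC₁ _ (hπmem t)) (le_max_left _ _)
  have hNe'B : ∀ t, |Ne' t| ≤ C := fun t =>
    le_trans (hC₂ _ (hπmem t)) (le_max_right _ _)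
  -- extended Nstar
  set NsE : ℝ → ℝ → ℂ := fun ω t =>
    -(Ne t : ℂ) + (Ne 0 : ℂ) * (Real.cos (ω * t) : ℂ) +
      ∫ z in (0:ℝ)..t, (Real.cos (ω * z) : ℂ) * (Ne' (t - z) : ℂ) with hNsEdef
  have hNsEc : ∀ ω : ℝ, Continuous (NsE ω) := by
    intro ω
    apply Continuous.add
    · fun_prop
    · exact intervalIntegral.continuous_parametric_intervalIntegral_of_continuous
        (by fun_prop) continuous_id
  -- bound on NsE for |t| ≤ T
  have hNsEB : ∀ (ω t : ℝ), |t| ≤ T → ‖NsE ω t‖ ≤ 2 * C + C * T := by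
    intro ω t ht
    have h1 : ‖∫ z in (0:ℝ)..t, (Real.cos (ω * z) : ℂ) * (Ne' (t - z) : ℂ)‖
        ≤ C * |t - 0| := by
      apply intervalIntegral.norm_integral_le_of_norm_le_const
      intro z _
      rw [norm_mul, Complex.norm_real, Complex.norm_real, Real.norm_eq_abs,
        Real.norm_eq_abs]
      calc |Real.cos (ω * z)| * |Ne' (t - z)| ≤ 1 * C :=
          mul_le_mul (Real.abs_cos_le_one _) (hNe'B _) (abs_nonneg _) zero_le_one
        _ = C := one_mul C
    rw [sub_zero] at h1
    calc ‖NsE ω t‖ ≤ ‖-(Ne t : ℂ) + (Ne 0 : ℂ) * (Real.cos (ω * t) : ℂ)‖ +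
          ‖∫ z in (0:ℝ)..t, (Real.cos (ω * z) : ℂ) * (Ne' (t - z) : ℂ)‖ := norm_add_le _ _
      _ ≤ (‖(-(Ne t : ℂ))‖ + ‖(Ne 0 : ℂ) * (Real.cos (ω * t) : ℂ)‖) + C * |t| := by
          gcongr; exact norm_add_le _ _
      _ ≤ (C + C * 1) + C * T := by
          have e1 : ‖(-(Ne t : ℂ))‖ ≤ C := by
            rw [norm_neg, Complex.norm_real, Real.norm_eq_abs]; exact hNeB t
          have e2 : ‖(Ne 0 : ℂ) * (Real.cos (ω * t) : ℂ)‖ ≤ C * 1 := by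
            rw [norm_mul, Complex.norm_real, Complex.norm_real, Real.norm_eq_abs,
              Real.norm_eq_abs]
            exact mul_le_mul (hNeB 0) (Real.abs_cos_le_one _) (abs_nonneg _) hC0
          have e3 : C * |t| ≤ C * T := mul_le_mul_of_nonneg_left ht hC0
          exact add_le_add (add_le_add e1 e2) e3
      _ = 2 * C + C * T := by ring
  -- the kernel
  set k : ℝ → ℝ → ℝ → ℂ := fun ω t s =>
    Complex.exp (-μ * ((t : ℂ) - (s : ℂ))) * NsE ω (t - s) with hkdef
  have hkc : ∀ ω : ℝ, Continuous (fun p : ℝ × ℝ => k ω p.1 p.2) := by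
    intro ω
    apply Continuous.mul
    · fun_prop
    · exact (hNsEc ω).comp (continuous_fst.sub continuous_snd)
  -- bound on the kernel on the square
  set M : ℝ := max 1 (Real.exp (‖μ‖ * T) * (2 * C + C * T)) with hMdef
  have hM1 : (1:ℝ) ≤ M := le_max_left _ _
  have hM0 : (0:ℝ) < M := lt_of_lt_of_le one_pos hM1
  have hkB : ∀ (ω : ℝ), ∀ t ∈ Icc (0:ℝ) T, ∀ s ∈ Icc (0:ℝ) T, ‖k ω t s‖ ≤ M := by
    intro ω t ht s hs
    have hts : |t - s| ≤ T := by
      rw [abs_le]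
      exact ⟨by linarith [ht.1, hs.2], by linarith [ht.2, hs.1]⟩
    have he : ‖Complex.exp (-μ * ((t : ℂ) - (s : ℂ)))‖ ≤ Real.exp (‖μ‖ * T) := by
      rw [Complex.norm_exp, Real.exp_le_exp]
      have : ((t : ℂ) - (s : ℂ)) = ((t - s : ℝ) : ℂ) := by push_cast; ring
      rw [this]
      have hre : (-μ * ((t - s : ℝ) : ℂ)).re = -μ.re * (t - s) := by
        simp [Complex.mul_re]
      rw [hre]
      calc -μ.re * (t - s) ≤ |(-μ.re) * (t - s)| := le_abs_self _
        _ = |μ.re| * |t - s| := by rw [abs_mul, abs_neg]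
        _ ≤ ‖μ‖ * T :=
          mul_le_mul (Complex.abs_re_le_norm μ) hts (abs_nonneg _) (norm_nonneg μ)
    calc ‖k ω t s‖ = ‖Complex.exp (-μ * ((t : ℂ) - (s : ℂ)))‖ * ‖NsE ω (t - s)‖ :=
        norm_mul _ _
      _ ≤ Real.exp (‖μ‖ * T) * (2 * C + C * T) := by
          apply mul_le_mul he (hNsEB ω _ hts) (norm_nonneg _) (Real.exp_pos _).le
      _ ≤ M := le_max_right _ _
  refine ⟨Real.exp (M * T), Real.exp_pos _, fun ω => ?_⟩
  -- the inclusion of ℝ into [0,T]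
  set ι : ℝ → Icc (0:ℝ) T := fun s => ⟨π s, hπmem s⟩ with hιdef
  have hιc : Continuous ι := hπc.subtype_mk _
  have hιid : ∀ s (hs : s ∈ Icc (0:ℝ) T), ι s = ⟨s, hs⟩ := fun s hs => Subtype.ext (hπid s hs)
  -- the Picard operator
  have hIntc : ∀ (u : ℝ → ℂ), Continuous u → ∀ t : ℝ,
      Continuous fun s => k ω t s * u s := by
    intro u hu t
    exact (((hkc ω).comp (Continuous.prodMk_right t))).mul hu
  have hΦc : ∀ v : ContinuousMap (Icc (0:ℝ) T) ℂ, Continuous fun t : ℝ =>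
      Complex.exp (Complex.I * ω * (t:ℂ)) + ∫ s in (0:ℝ)..t, k ω t s * v (ι s) := by
    intro v
    apply Continuous.add
    · fun_prop
    · apply intervalIntegral.continuous_parametric_intervalIntegral_of_continuous
        (f := fun t s => k ω t s * v (ι s)) ?_ continuous_id
      exact (hkc ω).mul ((map_continuous v).comp (hιc.comp continuous_snd))
  set Φ : ContinuousMap (Icc (0:ℝ) T) ℂ → ContinuousMap (Icc (0:ℝ) T) ℂ :=
    fun v => ⟨fun t => Complex.exp (Complex.I * ω * (t.1:ℂ)) +
      ∫ s in (0:ℝ)..t.1, k ω t.1 s * v (ι s),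
      (hΦc v).comp continuous_subtype_val⟩ with hΦdef
  have hΦapp : ∀ (v : ContinuousMap (Icc (0:ℝ) T) ℂ) (t : Icc (0:ℝ) T),
      Φ v t = Complex.exp (Complex.I * ω * (t.1:ℂ)) +
        ∫ s in (0:ℝ)..t.1, k ω t.1 s * v (ι s) := fun v t => rfl
  -- the key iterate estimate
  have key : ∀ (v w : ContinuousMap (Icc (0:ℝ) T) ℂ) (n : ℕ) (t : Icc (0:ℝ) T),
      ‖Φ^[n] v t - Φ^[n] w t‖ ≤ ‖v - w‖ * (M * t.1) ^ n / n.factorial := by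
    intro v w n
    induction n with
    | zero =>
      intro t
      simpa using ContinuousMap.norm_coe_le_norm (v - w) t
    | succ n ih =>
      intro t
      rw [Function.iterate_succ_apply', Function.iterate_succ_apply']
      set A := Φ^[n] v with hA
      set B := Φ^[n] w with hB
      have ht0 : (0:ℝ) ≤ t.1 := t.2.1
      have hAc : Continuous fun s => A (ι s) := (map_continuous A).comp hιc
      have hBc : Continuous fun s => B (ι s) := (map_continuous B).comp hιc
      have hdiff : Φ A t - Φ B t =
          ∫ s in (0:ℝ)..t.1, k ω t.1 s * (A (ι s) - B (ι s)) := by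
        rw [hΦapp, hΦapp, add_sub_add_left_eq_sub,
          ← intervalIntegral.integral_sub
            ((hIntc _ hAc t.1).intervalIntegrable _ _)
            ((hIntc _ hBc t.1).intervalIntegrable _ _)]
        congr 1
        funext s
        ring
      rw [hdiff]
      have hmono : ∀ s ∈ Icc (0:ℝ) t.1, ‖k ω t.1 s * (A (ι s) - B (ι s))‖ ≤
          M * (‖v - w‖ * (M * s) ^ n / n.factorial) := by
        intro s hs
        have hsIcc : s ∈ Icc (0:ℝ) T := ⟨hs.1, hs.2.trans t.2.2⟩
        rw [norm_mul]
        have h1 : ‖k ω t.1 s‖ ≤ M := hkB ω t.1 t.2 s hsIcc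
        have h2 : ‖A (ι s) - B (ι s)‖ ≤ ‖v - w‖ * (M * s) ^ n / n.factorial := by
          have := ih (ι s)
          rwa [show ((ι s : Icc (0:ℝ) T) : ℝ) = s from hπid s hsIcc] at this
        exact mul_le_mul h1 h2 (norm_nonneg _)
          (le_trans (norm_nonneg _) (hkB ω t.1 t.2 s hsIcc))
      calc ‖∫ s in (0:ℝ)..t.1, k ω t.1 s * (A (ι s) - B (ι s))‖
          ≤ ∫ s in (0:ℝ)..t.1, ‖k ω t.1 s * (A (ι s) - B (ι s))‖ :=
            intervalIntegral.norm_integral_le_integral_norm ht0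
        _ ≤ ∫ s in (0:ℝ)..t.1, M * (‖v - w‖ * (M * s) ^ n / n.factorial) := by
            apply intervalIntegral.integral_mono_on ht0
              ((hIntc _ (hAc.sub hBc) t.1).norm.intervalIntegrable _ _)
              ((by fun_prop : Continuous fun s : ℝ =>
                M * (‖v - w‖ * (M * s) ^ n / n.factorial)).intervalIntegrable _ _)
              hmono
        _ = ‖v - w‖ * (M * t.1) ^ (n + 1) / (n + 1).factorial := by
            have hrw : ∀ s : ℝ, M * (‖v - w‖ * (M * s) ^ n / n.factorial)
                = (M ^ (n + 1) * ‖v - w‖ / n.factorial) * s ^ n := by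
              intro s; rw [mul_pow]; ring
            simp_rw [hrw]
            rw [intervalIntegral.integral_const_mul, integral_pow, Nat.factorial_succ, mul_pow]
            push_cast
            have hfac : (n.factorial : ℝ) ≠ 0 := Nat.cast_ne_zero.2 n.factorial_ne_zero
            field_simp
            ring
  -- contraction for some iterate
  obtain ⟨n, hn⟩ : ∃ n : ℕ, (M * T) ^ n / n.factorial < 1 := by
    have h := FloorSemiring.tendsto_pow_div_factorial_atTop (K := ℝ) (M * T)
    exact (h.eventually (gt_mem_nhds one_pos)).exists
  set q : ℝ := (M * T) ^ n / n.factorial with hqdef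
  have hq0 : 0 ≤ q := div_nonneg (pow_nonneg (mul_nonneg hM0.le hT0) n) (Nat.cast_nonneg _)
  have hlip : LipschitzWith q.toNNReal (Φ^[n]) := by
    apply LipschitzWith.of_dist_le_mul
    intro v w
    rw [Real.coe_toNNReal _ hq0, ContinuousMap.dist_le (by positivity)]
    intro t
    rw [dist_eq_norm]
    calc ‖Φ^[n] v t - Φ^[n] w t‖ ≤ ‖v - w‖ * (M * t.1) ^ n / n.factorial := key v w n t
      _ ≤ ‖v - w‖ * (M * T) ^ n / n.factorial := by
          gcongr
          exacts [mul_nonneg hM0.le t.2.1, t.2.2]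
      _ = q * dist v w := by rw [dist_eq_norm]; ring
  have hcontr : ContractingWith q.toNNReal (Φ^[n]) := by
    refine ⟨?_, hlip⟩
    rw [← Real.toNNReal_one]
    exact (Real.toNNReal_lt_toNNReal_iff one_pos).2 hn
  set v₀ : ContinuousMap (Icc (0:ℝ) T) ℂ := ContractingWith.fixedPoint (Φ^[n]) hcontr with hv₀
  have hfix : Φ v₀ = v₀ := hcontr.isFixedPt_fixedPoint_iterate
  have huniq : ∀ u : ContinuousMap (Icc (0:ℝ) T) ℂ, Φ u = u → u = v₀ := fun u hu =>
    hcontr.fixedPoint_unique ((show Function.IsFixedPt Φ u from hu).iterate n)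
  -- the solution
  set v : ℝ → ℂ := fun s => v₀ (ι s) with hvdef
  have hvc : Continuous v := (map_continuous v₀).comp hιc
  have hveq : ∀ t (ht : t ∈ Icc (0:ℝ) T),
      v t = Complex.exp (Complex.I * ω * (t:ℂ)) + ∫ s in (0:ℝ)..t, k ω t s * v s := by
    intro t ht
    have h1 : v t = Φ v₀ ⟨t, ht⟩ := by
      rw [hfix]; simp only [hvdef]; rw [hιid t ht]
    rw [h1, hΦapp]
  -- identification of kernels on [0,T]
  have hNsEq : ∀ u ∈ Icc (0:ℝ) T, NsE ω u = Nstar N N' ω u := by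
    intro u hu
    simp only [hNsEdef, Nstar, hNedef, hNe'def]
    rw [hπid u hu, hπid 0 (left_mem_Icc.2 hT0)]
    congr 1
    apply intervalIntegral.integral_congr
    intro z hz
    rw [uIcc_of_le hu.1] at hz
    have hz' : π (u - z) = u - z :=
      hπid (u - z) ⟨by linarith [hz.2], by linarith [hz.1, hu.2]⟩
    simp only [hz']
  have hcong : ∀ (u : ℝ → ℂ), ∀ t ∈ Icc (0:ℝ) T,
      (∫ s in (0:ℝ)..t, k ω t s * u s) =
      ∫ s in (0:ℝ)..t, Complex.exp (-μ * ((t:ℂ) - (s:ℂ))) * Nstar N N' ω (t - s) * u s := by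
    intro u t ht
    apply intervalIntegral.integral_congr
    intro s hs
    rw [uIcc_of_le ht.1] at hs
    have hmem : (t - s) ∈ Icc (0:ℝ) T := ⟨by linarith [hs.2], by linarith [hs.1, ht.2]⟩
    simp only [hkdef]
    rw [hNsEq _ hmem]
  -- uniform bound
  have hexp1 : ∀ t : ℝ, ‖Complex.exp (Complex.I * (ω:ℂ) * (t:ℂ))‖ = 1 := by
    intro t
    rw [Complex.norm_exp]
    have : (Complex.I * (ω:ℂ) * (t:ℂ)).re = 0 := by simp [Complex.mul_re]
    rw [this, Real.exp_zero]
  have hvB : ∀ t ∈ Icc (0:ℝ) T, ‖v t‖ ≤ Real.exp (M * T) := by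
    have hgle : ∀ t ∈ Icc (0:ℝ) T, ‖v t‖ ≤ 1 + M * ∫ s in (0:ℝ)..t, ‖v s‖ := by
      intro t ht
      have hbound : ‖∫ s in (0:ℝ)..t, k ω t s * v s‖ ≤ ∫ s in (0:ℝ)..t, M * ‖v s‖ := by
        calc ‖∫ s in (0:ℝ)..t, k ω t s * v s‖ ≤ ∫ s in (0:ℝ)..t, ‖k ω t s * v s‖ :=
            intervalIntegral.norm_integral_le_integral_norm ht.1
          _ ≤ ∫ s in (0:ℝ)..t, M * ‖v s‖ := by
              apply intervalIntegral.integral_mono_on ht.1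
                ((hIntc v hvc t).norm.intervalIntegrable _ _)
                ((continuous_const.mul hvc.norm).intervalIntegrable _ _)
              intro s hs
              rw [norm_mul]
              exact mul_le_mul_of_nonneg_right
                (hkB ω t ht s ⟨hs.1, hs.2.trans ht.2⟩) (norm_nonneg _)
      calc ‖v t‖ ≤ ‖Complex.exp (Complex.I * (ω:ℂ) * (t:ℂ))‖ +
            ‖∫ s in (0:ℝ)..t, k ω t s * v s‖ := by rw [hveq t ht]; exact norm_add_le _ _
        _ ≤ 1 + M * ∫ s in (0:ℝ)..t, ‖v s‖ := by
            rw [hexp1 t]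
            apply add_le_add_right
            rw [← intervalIntegral.integral_const_mul]
            exact hbound
    have hmain := my_gronwall_int hvc.norm (fun t => norm_nonneg _) zero_le_one hM0 hgle
    intro t ht
    calc ‖v t‖ ≤ 1 * Real.exp (M * t) := hmain t ht
      _ ≤ Real.exp (M * T) := by
          rw [one_mul]
          exact Real.exp_le_exp.2 (mul_le_mul_of_nonneg_left ht.2 hM0.le)
  -- conclusion
  refine ⟨v, hvc.continuousOn, ?_, hvB, ?_⟩
  · intro t ht
    rw [hveq t ht, hcong v t ht]
  · intro w hw hweq t ht
    set w₀ : ContinuousMap (Icc (0:ℝ) T) ℂ :=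
      ⟨fun t => w t.1, hw.comp_continuous continuous_subtype_val (fun t => t.2)⟩ with hw₀
    have hfixw : Φ w₀ = w₀ := by
      ext u
      rw [hΦapp]
      have h2 : (∫ s in (0:ℝ)..u.1, k ω u.1 s * w₀ (ι s)) =
          ∫ s in (0:ℝ)..u.1, k ω u.1 s * w s := by
        apply intervalIntegral.integral_congr
        intro s hs
        rw [uIcc_of_le u.2.1] at hs
        have hsIcc : s ∈ Icc (0:ℝ) T := ⟨hs.1, hs.2.trans u.2.2⟩
        simp only [hw₀, ContinuousMap.coe_mk]
        rw [hιid s hsIcc]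
      rw [h2, hcong w u.1 u.2]
      exact (hweq u.1 u.2).symm
    have : w₀ = v₀ := huniq w₀ hfixw
    calc w t = w₀ ⟨t, ht⟩ := rfl
      _ = v₀ ⟨t, ht⟩ := by rw [this]
      _ = v t := by simp only [hvdef]; rw [hιid t ht]
end

section
/- Let T > 0 and let N : [0,T] → ℝ be continuous. For each real ω ≠ 0 let s(·;ω) : [0,T] → ℂ be the unique continuous solution of the integral equation s(t) = sin(ωt) − ω·∫₀ᵗ sin(ω(t−τ))·(∫₀^τ N(τ−z)·s(z) dz) dτ. Then for every t ∈ [0,T], the limit of s(t;ω)/ω as ω → 0 exists and equals t. -/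
open MeasureTheory Set Complex Filter
open scoped Classical

/-- `s(t;ω)/ω → t` as `ω → 0` for the sine-type modal solutions. -/
theorem sine_solution_limit
    (T : ℝ) (hT : 0 < T) (N : ℝ → ℝ) (hNc : ContinuousOn N (Icc (0:ℝ) T))
    (s : ℝ → ℝ → ℂ)
    (hcont : ∀ ω : ℝ, ω ≠ 0 → ContinuousOn (s ω) (Icc (0:ℝ) T))
    (heq : ∀ ω : ℝ, ω ≠ 0 → ∀ t ∈ Icc (0:ℝ) T,
      s ω t = Complex.sin (ω * (t : ℂ)) -
        ω * ∫ τ in (0:ℝ)..t, Complex.sin (ω * ((t : ℂ) - (τ : ℂ))) *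
          ∫ z in (0:ℝ)..τ, (N (τ - z) : ℂ) * s ω z) :
    ∀ t ∈ Icc (0:ℝ) T,
      Tendsto (fun ω : ℝ => s ω t / (ω : ℂ)) (nhdsWithin 0 {(0:ℝ)}ᶜ)
        (nhds (t : ℂ)) := by
  -- bound on N
  obtain ⟨B, hB⟩ : ∃ B, ∀ x ∈ Icc (0:ℝ) T, |N x| ≤ B := by
    obtain ⟨B, hB⟩ := isCompact_Icc.exists_bound_of_continuousOn hNc
    exact ⟨B, fun x hx => by simpa using hB x hx⟩
  have hB0 : 0 ≤ B := le_trans (_root_.abs_nonneg _) (hB 0 ⟨le_rfl, hT.le⟩)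
  set ε : ℝ := 1 / (2 * (B * T ^ 3 + 1)) with hε
  have hden : 0 < B * T ^ 3 + 1 := by positivity
  have hεpos : 0 < ε := by positivity
  have hεid : ε * (2 * (B * T ^ 3 + 1)) = 1 := by
    rw [hε]; field_simp
  -- inner integral bound
  have inner_bd : ∀ ω : ℝ, ω ≠ 0 → ∀ (M : ℝ), (∀ u ∈ Icc (0:ℝ) T, ‖s ω u‖ ≤ M) →
      ∀ τ ∈ Icc (0:ℝ) T, ‖∫ z in (0:ℝ)..τ, (N (τ - z) : ℂ) * s ω z‖ ≤ B * M * T := by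
    intro ω hω M hM τ hτ
    have hM0 : 0 ≤ M := le_trans (norm_nonneg _) (hM 0 ⟨le_rfl, hT.le⟩)
    have h1 : ‖∫ z in (0:ℝ)..τ, (N (τ - z) : ℂ) * s ω z‖ ≤ B * M * |τ - 0| := by
      apply intervalIntegral.norm_integral_le_of_norm_le_const
      intro z hz
      rw [uIoc_of_le hτ.1] at hz
      have hz1 : z ∈ Icc (0:ℝ) T := ⟨hz.1.le, hz.2.trans hτ.2⟩
      have hz2 : τ - z ∈ Icc (0:ℝ) T := ⟨by linarith [hz.2], by linarith [hz.1, hτ.2]⟩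
      calc ‖(N (τ - z) : ℂ) * s ω z‖ = |N (τ - z)| * ‖s ω z‖ := by
            rw [norm_mul, Complex.norm_real, Real.norm_eq_abs]
        _ ≤ B * M := mul_le_mul (hB _ hz2) (hM z hz1) (norm_nonneg _) hB0
    refine h1.trans ?_
    have h2 : |τ - 0| ≤ T := by rw [sub_zero, _root_.abs_of_nonneg hτ.1]; exact hτ.2
    exact mul_le_mul_of_nonneg_left h2 (by positivity)
  -- sin norm bound
  have sin_bd : ∀ (ω a : ℝ), ‖Complex.sin ((ω : ℂ) * (a : ℂ))‖ ≤ |ω| * |a| := by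
    intro ω a
    have h : ((ω : ℂ) * (a : ℂ)) = ((ω * a : ℝ) : ℂ) := by push_cast; ring
    rw [h, ← Complex.ofReal_sin, Complex.norm_real, Real.norm_eq_abs, ← _root_.abs_mul]
    exact Real.abs_sin_le_abs
  -- outer integral bound
  have outer_bd : ∀ ω : ℝ, ω ≠ 0 → ∀ (M : ℝ), 0 ≤ M → (∀ u ∈ Icc (0:ℝ) T, ‖s ω u‖ ≤ M) →
      ∀ t ∈ Icc (0:ℝ) T,
      ‖∫ τ in (0:ℝ)..t, Complex.sin (ω * ((t : ℂ) - (τ : ℂ))) *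
          ∫ z in (0:ℝ)..τ, (N (τ - z) : ℂ) * s ω z‖ ≤ |ω| * T * (B * M * T) * T := by
    intro ω hω M hM0 hM t ht
    have h1 : ‖∫ τ in (0:ℝ)..t, Complex.sin (ω * ((t : ℂ) - (τ : ℂ))) *
          ∫ z in (0:ℝ)..τ, (N (τ - z) : ℂ) * s ω z‖ ≤ (|ω| * T * (B * M * T)) * |t - 0| := by
      apply intervalIntegral.norm_integral_le_of_norm_le_const
      intro τ hτ
      rw [uIoc_of_le ht.1] at hτ
      have hτ1 : τ ∈ Icc (0:ℝ) T := ⟨hτ.1.le, hτ.2.trans ht.2⟩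
      have hsin : ‖Complex.sin ((ω : ℂ) * ((t : ℂ) - (τ : ℂ)))‖ ≤ |ω| * T := by
        have h2 : ((t : ℂ) - (τ : ℂ)) = ((t - τ : ℝ) : ℂ) := by push_cast; ring
        rw [h2]
        refine (sin_bd ω (t - τ)).trans ?_
        have h3 : |t - τ| ≤ T := by
          rw [_root_.abs_of_nonneg (by linarith [hτ.2])]; linarith [hτ.1, ht.2]
        exact mul_le_mul_of_nonneg_left h3 (_root_.abs_nonneg _)
      calc ‖Complex.sin ((ω : ℂ) * ((t : ℂ) - (τ : ℂ))) *
            ∫ z in (0:ℝ)..τ, (N (τ - z) : ℂ) * s ω z‖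
          = ‖Complex.sin ((ω : ℂ) * ((t : ℂ) - (τ : ℂ)))‖ *
            ‖∫ z in (0:ℝ)..τ, (N (τ - z) : ℂ) * s ω z‖ := norm_mul _ _
        _ ≤ (|ω| * T) * (B * M * T) :=
            mul_le_mul hsin (inner_bd ω hω M hM τ hτ1) (norm_nonneg _) (by positivity)
    refine h1.trans ?_
    have h4 : |t - 0| ≤ T := by rw [sub_zero, _root_.abs_of_nonneg ht.1]; exact ht.2
    exact mul_le_mul_of_nonneg_left h4 (by positivity)
  -- uniform sup bound for small ω
  have sup_bd : ∀ ω : ℝ, ω ≠ 0 → |ω| ≤ ε →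
      ∀ u ∈ Icc (0:ℝ) T, ‖s ω u‖ ≤ 2 * |ω| * T := by
    intro ω hω hωε
    obtain ⟨t₀, ht₀, hmax⟩ := isCompact_Icc.exists_isMaxOn (nonempty_Icc.2 hT.le)
      ((hcont ω hω).norm)
    set M := ‖s ω t₀‖ with hMdef
    have hM : ∀ u ∈ Icc (0:ℝ) T, ‖s ω u‖ ≤ M := fun u hu => hmax hu
    have hMnn : 0 ≤ M := norm_nonneg _
    have key : M ≤ |ω| * T + |ω| ^ 2 * (B * T ^ 3) * M := by
      have he := heq ω hω t₀ ht₀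
      calc M = ‖s ω t₀‖ := rfl
        _ ≤ ‖Complex.sin ((ω : ℂ) * (t₀ : ℂ))‖ +
            ‖(ω : ℂ)‖ * ‖∫ τ in (0:ℝ)..t₀, Complex.sin (ω * ((t₀ : ℂ) - (τ : ℂ))) *
              ∫ z in (0:ℝ)..τ, (N (τ - z) : ℂ) * s ω z‖ := by
            rw [he]; refine (norm_sub_le _ _).trans ?_; rw [norm_mul]
        _ ≤ |ω| * T + |ω| * (|ω| * T * (B * M * T) * T) := by
            have hn : ‖(ω : ℂ)‖ = |ω| := by rw [Complex.norm_real, Real.norm_eq_abs]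
            rw [hn]
            gcongr
            · refine (sin_bd ω t₀).trans ?_
              exact mul_le_mul_of_nonneg_left
                (by rw [_root_.abs_of_nonneg ht₀.1]; exact ht₀.2) (_root_.abs_nonneg _)
            · exact outer_bd ω hω M hMnn hM t₀ ht₀
        _ = |ω| * T + |ω| ^ 2 * (B * T ^ 3) * M := by ring
    have hhalf : |ω| ^ 2 * (B * T ^ 3) ≤ 1 / 2 := by
      have h1 : |ω| ^ 2 ≤ ε ^ 2 := by
        have := _root_.abs_nonneg ω
        nlinarith
      have hc : (0:ℝ) ≤ B * T ^ 3 := by positivity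
      nlinarith [sq_nonneg ε, mul_nonneg (sq_nonneg ε) hc, hεpos.le]
    intro u hu
    have hstep : M ≤ |ω| * T + (1/2) * M := by nlinarith
    exact (hM u hu).trans (by linarith)
  -- now the limit
  intro t ht
  have hωmem : ∀ᶠ ω : ℝ in nhdsWithin 0 {(0:ℝ)}ᶜ, ω ≠ 0 := by
    filter_upwards [self_mem_nhdsWithin] with ω hω
    simpa using hω
  have hωsmall : ∀ᶠ ω : ℝ in nhdsWithin 0 {(0:ℝ)}ᶜ, |ω| ≤ ε := by
    apply eventually_nhdsWithin_of_eventually_nhds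
    filter_upwards [Metric.ball_mem_nhds (0:ℝ) hεpos] with ω hω
    rw [Metric.mem_ball, Real.dist_eq, sub_zero] at hω
    exact hω.le
  -- part A : sin(ωt)/ω → t
  have hA : Tendsto (fun ω : ℝ => Complex.sin ((ω : ℂ) * (t : ℂ)) / (ω : ℂ))
      (nhdsWithin 0 {(0:ℝ)}ᶜ) (nhds (t : ℂ)) := by
    have hd : HasDerivAt (fun ω : ℝ => Real.sin (ω * t)) t 0 := by
      have := (Real.hasDerivAt_sin ((0:ℝ) * t)).comp 0 (hasDerivAt_mul_const t)
      simp at this; exact this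
    have hslope := hasDerivAt_iff_tendsto_slope.1 hd
    have hreal : Tendsto (fun ω : ℝ => Real.sin (ω * t) / ω)
        (nhdsWithin 0 {(0:ℝ)}ᶜ) (nhds t) := by
      refine hslope.congr' ?_
      filter_upwards [self_mem_nhdsWithin] with ω hω
      simp [slope_def_field, div_eq_iff, sub_zero]
    have hcast := (Complex.continuous_ofReal.continuousAt.tendsto).comp hreal
    refine hcast.congr' ?_
    filter_upwards [hωmem] with ω hω
    have hωC : (ω : ℂ) ≠ 0 := Complex.ofReal_ne_zero.2 hω
    simp only [Function.comp_apply]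
    push_cast [Complex.ofReal_sin]
    rfl
  -- part B : remainder → 0
  have hBt : Tendsto (fun ω : ℝ =>
      s ω t / (ω : ℂ) - Complex.sin ((ω : ℂ) * (t : ℂ)) / (ω : ℂ))
      (nhdsWithin 0 {(0:ℝ)}ᶜ) (nhds 0) := by
    refine squeeze_zero_norm' (a := fun ω : ℝ => 2 * B * T ^ 4 * ω ^ 2) ?_ ?_
    · filter_upwards [hωmem, hωsmall] with ω hω hωε
      have hωC : (ω : ℂ) ≠ 0 := Complex.ofReal_ne_zero.2 hω
      have he := heq ω hω t ht
      have hrw : s ω t / (ω : ℂ) - Complex.sin ((ω : ℂ) * (t : ℂ)) / (ω : ℂ) =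
          -(∫ τ in (0:ℝ)..t, Complex.sin (ω * ((t : ℂ) - (τ : ℂ))) *
            ∫ z in (0:ℝ)..τ, (N (τ - z) : ℂ) * s ω z) := by
        rw [he]; field_simp; ring
      rw [hrw, norm_neg]
      have hM := sup_bd ω hω hωε
      have := outer_bd ω hω (2 * |ω| * T) (by positivity) hM t ht
      refine this.trans ?_
      have habs : |ω| * T * (B * (2 * |ω| * T) * T) * T = 2 * B * T ^ 4 * |ω| ^ 2 := by ring
      rw [habs, _root_.sq_abs]
    · have hcont2 : Continuous (fun ω : ℝ => 2 * B * T ^ 4 * ω ^ 2) :=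
        continuous_const.mul (continuous_pow 2)
      have h0 := hcont2.tendsto 0
      norm_num at h0
      exact h0.mono_left nhdsWithin_le_nhds
  have := hA.add hBt
  simp only [add_zero] at this
  refine this.congr ?_
  intro ω; ring
end

section
/- Let T > 0 and let μ ∈ ℂ with μ ≠ 0. Then there exists a constant C > 0, depending only on μ and T, such that for every real ω with |ω| ≥ 1 and every t ∈ [0,T]: |∫₀ᵗ e^{−μ(t−s)}·cos(ω(t−s))·e^{iωs} ds − (1/(2μ))·e^{iωt}·(1 − e^{−μt})| ≤ C/|ω|. -/
open MeasureTheory Set Complex Filter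
open scoped Classical

/-- uniform asymptotic evaluation of the weighted cosine convolution of
the exponential `e^{iωt}`. -/
theorem cosine_convolution_asymptotics
    (T : ℝ) (hT : 0 < T) (μ : ℂ) (hμ : μ ≠ 0) :
    ∃ C > 0, ∀ ω : ℝ, 1 ≤ |ω| → ∀ t ∈ Icc (0:ℝ) T,
      ‖(∫ s in (0:ℝ)..t, Complex.exp (-μ * ((t : ℂ) - (s : ℂ))) *
          (Real.cos (ω * (t - s)) : ℂ) * Complex.exp (Complex.I * ω * (s : ℂ))) -
        (1 / (2 * μ)) * Complex.exp (Complex.I * ω * (t : ℂ)) *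
          (1 - Complex.exp (-μ * (t : ℂ)))‖ ≤ C / |ω| := by
  set A := Real.exp (‖μ‖ * T) with hA
  have hA1 : 1 ≤ A := Real.one_le_exp (by positivity)
  refine ⟨A*(A+1)*(T+1)*(‖μ‖+1), by positivity, ?_⟩
  intro ω hω t ht
  obtain ⟨ht0, htT⟩ := ht
  have hω0 : (0:ℝ) < |ω| := lt_of_lt_of_le one_pos hω
  set c : ℂ := μ + 2*Complex.I*ω with hc
  -- pointwise identity
  have key : ∀ s : ℝ,
      Complex.exp (-μ * ((t:ℂ) - s)) * (Real.cos (ω*(t-s)) : ℂ) * Complex.exp (Complex.I*ω*s)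
      = Complex.exp ((Complex.I*ω - μ)*t) / 2 * Complex.exp (μ * s)
        + Complex.exp (-(μ + Complex.I*ω)*t) / 2 * Complex.exp (c * s) := by
    intro s
    have comb : ∀ a b d e : ℂ, Complex.exp a * ((Complex.exp b + Complex.exp d)/2) * Complex.exp e
        = (Complex.exp (a+b+e) + Complex.exp (a+d+e))/2 := by
      intro a b d e
      rw [Complex.exp_add, Complex.exp_add, Complex.exp_add, Complex.exp_add]; ring
    rw [Complex.ofReal_cos, Complex.cos]
    push_cast
    rw [comb, div_mul_eq_mul_div, div_mul_eq_mul_div, ← add_div,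
      ← Complex.exp_add, ← Complex.exp_add]
    simp only [hc]
    congr 2 <;> ring
  rw [intervalIntegral.integral_congr (fun s _ => key s)]
  have i1 : IntervalIntegrable (fun s : ℝ => Complex.exp ((Complex.I*ω - μ)*t) / 2 * Complex.exp (μ * s)) volume 0 t :=
    ((continuous_const.mul (Complex.continuous_exp.comp (continuous_const.mul Complex.continuous_ofReal))).intervalIntegrable 0 t)
  have i2 : IntervalIntegrable (fun s : ℝ => Complex.exp (-(μ + Complex.I*ω)*t) / 2 * Complex.exp (c * s)) volume 0 t :=
    ((continuous_const.mul (Complex.continuous_exp.comp (continuous_const.mul Complex.continuous_ofReal))).intervalIntegrable 0 t)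
  rw [intervalIntegral.integral_add i1 i2, intervalIntegral.integral_const_mul,
    intervalIntegral.integral_const_mul, integral_exp_mul_complex hμ]
  have main : Complex.exp ((Complex.I*ω - μ)*t) / 2 * ((Complex.exp (μ*(t:ℂ)) - Complex.exp (μ*((0:ℝ):ℂ)))/μ)
      = (1 / (2 * μ)) * Complex.exp (Complex.I * ω * t) * (1 - Complex.exp (-μ * t)) := by
    rw [Complex.ofReal_zero, mul_zero, Complex.exp_zero]
    field_simp
    rw [mul_sub, mul_sub, mul_one, ← Complex.exp_add, ← Complex.exp_add]
    ring_nf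
  rw [main]
  rw [add_sub_cancel_left]
  have hnormk : ‖Complex.exp (-(μ + Complex.I*ω)*t)‖ ≤ A := by
    rw [Complex.norm_exp]
    apply Real.exp_le_exp.2
    have : (-(μ + Complex.I*ω)*t).re = -μ.re * t := by simp [Complex.add_re, Complex.mul_re]
    rw [this]
    calc -μ.re * t ≤ |μ.re| * t := by nlinarith [neg_abs_le μ.re, abs_nonneg μ.re]
      _ ≤ ‖μ‖ * T := by
          have h := Complex.abs_re_le_norm μ
          nlinarith [norm_nonneg μ, abs_nonneg μ.re]
  have hexpb : ∀ s ∈ Set.uIoc (0:ℝ) t, ‖Complex.exp (c * s)‖ ≤ A := by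
    intro s hs
    have hs' : s ∈ Set.Ioc 0 t := by rwa [Set.uIoc_of_le ht0] at hs
    rw [Complex.norm_exp]
    apply Real.exp_le_exp.2
    have : (c * s).re = μ.re * s := by simp [hc, Complex.add_re, Complex.mul_re]
    rw [this]
    have hs0 : 0 ≤ s := le_of_lt hs'.1
    have hsT : s ≤ T := le_trans hs'.2 htT
    calc μ.re * s ≤ |μ.re| * s := by nlinarith [le_abs_self μ.re, abs_nonneg μ.re]
      _ ≤ ‖μ‖ * T := by
          have h := Complex.abs_re_le_norm μ
          nlinarith [norm_nonneg μ, abs_nonneg μ.re]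
  rw [norm_mul, norm_div]
  have hnorm2 : ‖(2:ℂ)‖ = 2 := by norm_num
  rw [hnorm2]
  by_cases hcase : |ω| ≤ ‖μ‖
  · -- small ω: bound integral by T*A
    have hint : ‖∫ s in (0:ℝ)..t, Complex.exp (c * s)‖ ≤ A * |t - 0| :=
      intervalIntegral.norm_integral_le_of_norm_le_const hexpb
    have hb : ‖Complex.exp (-(μ + Complex.I*ω)*t)‖ / 2 * ‖∫ s in (0:ℝ)..t, Complex.exp (c * s)‖
        ≤ A / 2 * (A * T) := by
      apply mul_le_mul (by linarith) _ (norm_nonneg _) (by positivity)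
      calc ‖∫ s in (0:ℝ)..t, Complex.exp (c * s)‖ ≤ A * |t - 0| := hint
        _ ≤ A * T := by rw [sub_zero, _root_.abs_of_nonneg ht0]; nlinarith
    refine hb.trans ?_
    rw [le_div_iff₀ hω0]
    have hμn : (0:ℝ) ≤ ‖μ‖ := norm_nonneg _
    nlinarith [mul_nonneg (mul_nonneg (by linarith : (0:ℝ) ≤ A) hT.le) hμn,
      mul_le_mul_of_nonneg_left hcase (by positivity : (0:ℝ) ≤ A*A*T)]
  · push_neg at hcase
    have hcne : c ≠ 0 := by
      intro h0
      have : ‖μ‖ = ‖(2:ℂ)*Complex.I*ω‖ := by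
        rw [hc] at h0
        have : μ = -(2*Complex.I*ω) := by linear_combination h0
        rw [this, norm_neg]
      rw [norm_mul, norm_mul, Complex.norm_I, Complex.norm_ofNat, Complex.norm_real, Real.norm_eq_abs] at this
      nlinarith
    rw [integral_exp_mul_complex hcne, Complex.ofReal_zero, mul_zero, Complex.exp_zero]
    have hct : ‖Complex.exp (c*t)‖ ≤ A := by
      rw [Complex.norm_exp]
      apply Real.exp_le_exp.2
      have : (c * t).re = μ.re * t := by simp [hc, Complex.add_re, Complex.mul_re]
      rw [this]
      calc μ.re * t ≤ |μ.re| * t := by nlinarith [le_abs_self μ.re, abs_nonneg μ.re]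
        _ ≤ ‖μ‖ * T := by
            have h := Complex.abs_re_le_norm μ
            nlinarith [norm_nonneg μ, abs_nonneg μ.re]
    have hclb : |ω| ≤ ‖c‖ := by
      have h2 : ‖(2:ℂ)*Complex.I*ω‖ = 2*|ω| := by
        rw [norm_mul, norm_mul, Complex.norm_I, Complex.norm_ofNat, Complex.norm_real, Real.norm_eq_abs]; ring
      have := norm_sub_norm_le ((2:ℂ)*Complex.I*ω) (-μ)
      simp only [sub_neg_eq_add, norm_neg] at this
      rw [h2] at this
      calc |ω| ≤ 2*|ω| - ‖μ‖ := by linarith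
        _ ≤ ‖(2:ℂ)*Complex.I*↑ω + μ‖ := this
        _ = ‖c‖ := by rw [hc]; ring_nf
    have hXb : ‖(Complex.exp (c*t) - 1)/c‖ ≤ (A+1)/|ω| := by
      rw [norm_div]
      apply div_le_div₀ (by positivity) _ hω0 hclb
      calc ‖Complex.exp (c*t) - 1‖ ≤ ‖Complex.exp (c*t)‖ + ‖(1:ℂ)‖ := norm_sub_le _ _
        _ ≤ A + 1 := by rw [norm_one]; linarith
    calc ‖Complex.exp (-(μ + Complex.I*ω)*t)‖/2 * ‖(Complex.exp (c*t) - 1)/c‖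
        ≤ A/2 * ((A+1)/|ω|) := mul_le_mul (by linarith) hXb (norm_nonneg _) (by positivity)
      _ ≤ A*(A+1)*(T+1)*(‖μ‖+1)/|ω| := by
          rw [← mul_div_assoc, div_le_div_iff₀ hω0 hω0]
          have hμn : (0:ℝ) ≤ ‖μ‖ := norm_nonneg _
          have key2 : A/2*(A+1) ≤ A*(A+1)*(T+1)*(‖μ‖+1) := by
            nlinarith [mul_nonneg (mul_nonneg (mul_nonneg (by linarith : (0:ℝ) ≤ A) (by linarith : (0:ℝ) ≤ A+1)) hT.le) hμn,
              mul_nonneg (mul_nonneg (by linarith : (0:ℝ) ≤ A) (by linarith : (0:ℝ) ≤ A+1)) hμn,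
              mul_nonneg (mul_nonneg (by linarith : (0:ℝ) ≤ A) (by linarith : (0:ℝ) ≤ A+1)) hT.le,
              mul_nonneg (by linarith : (0:ℝ) ≤ A) (by linarith : (0:ℝ) ≤ A+1)]
          nlinarith [mul_le_mul_of_nonneg_right key2 (mul_pos hω0 hω0).le, mul_pos hω0 hω0]
end
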